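/- arXiv:2209.02993 — 6 statements merged into one kernel-verified Lean document; each statement's English description precedes it below -/
import Mathlib

section
/- For every ξ ≥ 0, V*_{1/2}(ξ) = e^ξ·(1 − (2/√π)·∫_0^{√ξ} e^{−t²} dt) − 1 + (2/√π)·√ξ. That is, V*_{1/2}(ξ) = e^ξ·erfc(√ξ) − 1 + 2√(ξ/π), where erfc(x) = 1 − (2/√π)∫_0^x e^{−t²} dt is the complementary error function written as an explicit integral. -/
open Finset Real MeasureTheory

lemma hasSum_exp' (x : ℝ) : HasSum (fun n : ℕ => x ^ n / (Nat.factorial n : ℝ)) (Real.exp x) := by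
  rw [Real.exp_eq_exp_ℝ]
  simpa [div_eq_inv_mul] using NormedSpace.exp_series_hasSum_exp' (𝕂 := ℝ) x

lemma key_sum (n : ℕ) : ∀ a : ℝ, 0 < a →
    ∑ m ∈ range (n + 1), (-1 : ℝ) ^ m * (n.choose m : ℝ) / (a + m)
      = (Nat.factorial n : ℝ) / ∏ i ∈ range (n + 1), (a + (i : ℝ)) := by
  induction n with
  | zero => intro a ha; simp
  | succ n ih =>
    intro a ha
    have ha1 : (0:ℝ) < a + 1 := by linarith
    have h1 := ih a ha
    have h2 := ih (a + 1) ha1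
    have split : ∑ m ∈ range (n + 1 + 1), (-1 : ℝ) ^ m * ((n+1).choose m : ℝ) / (a + m)
        = (∑ m ∈ range (n + 1), (-1 : ℝ) ^ m * (n.choose m : ℝ) / (a + m))
          - ∑ m ∈ range (n + 1), (-1 : ℝ) ^ m * (n.choose m : ℝ) / ((a+1) + m) := by
      rw [Finset.sum_range_succ' (fun m => (-1 : ℝ) ^ m * ((n+1).choose m : ℝ) / (a + m)) (n+1)]
      have e1 : ∀ i ∈ range (n+1),
          (-1 : ℝ) ^ (i+1) * ((n+1).choose (i+1) : ℝ) / (a + (i+1 : ℕ))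
          = (-1 : ℝ) ^ (i+1) * (n.choose (i+1) : ℝ) / (a + ((i+1 : ℕ) : ℝ))
            - (-1 : ℝ) ^ i * (n.choose i : ℝ) / ((a+1) + i) := by
        intro i _
        rw [Nat.choose_succ_succ]
        push_cast
        have : a + ((i : ℝ) + 1) ≠ 0 := by positivity
        field_simp
        ring
      rw [Finset.sum_congr rfl e1, Finset.sum_sub_distrib]
      have key := Finset.sum_range_succ' (fun m => (-1 : ℝ) ^ m * (n.choose m : ℝ) / (a + m)) (n+1)
      rw [Finset.sum_range_succ] at key
      norm_num [Nat.choose_succ_self] at key ⊢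
      linarith [key]
    rw [split, h1, h2]
    set P := ∏ i ∈ range (n + 1), (a + (i : ℝ)) with hPdef
    set Q := ∏ i ∈ range (n + 1), ((a + 1) + (i : ℝ)) with hQdef
    have hP : 0 < P := Finset.prod_pos (fun i _ => by positivity)
    have hQ : 0 < Q := Finset.prod_pos (fun i _ => by positivity)
    have hPro : ∏ i ∈ range (n + 1 + 1), (a + (i : ℝ)) = P * (a + (n + 1 : ℕ)) := by
      rw [Finset.prod_range_succ]
    have hQa : Q * a = P * (a + ((n : ℝ) + 1)) := by
      have := Finset.prod_range_succ' (fun i : ℕ => (a + (i : ℝ))) (n + 1)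
      rw [Finset.prod_range_succ] at this
      have e3 : ∏ i ∈ range (n+1), (a + ((i+1 : ℕ) : ℝ)) = Q := by
        apply Finset.prod_congr rfl
        intro i _
        push_cast
        ring
      rw [e3] at this
      push_cast at this ⊢
      linarith [this]
    rw [hPro]
    have hQ' : Q = P * (a + ((n:ℝ) + 1)) / a := by
      field_simp
      linarith [hQa]
    rw [hQ']
    have h3 : a + ((n:ℝ)+1) ≠ 0 := by positivity
    push_cast [Nat.factorial_succ]
    field_simp
    ring

lemma gamma_prod (n : ℕ) :
    Real.Gamma ((n : ℝ) + 3 / 2) = (∏ i ∈ range (n + 1), ((1:ℝ)/2 + (i : ℝ))) * Real.sqrt π := by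
  induction n with
  | zero =>
    rw [show ((0:ℕ):ℝ) + 3/2 = 1/2 + 1 by norm_num, Real.Gamma_add_one (by norm_num),
      Real.Gamma_one_half_eq]
    simp
  | succ n ih =>
    have h : ((n+1 : ℕ) : ℝ) + 3/2 = ((n : ℝ) + 3/2) + 1 := by push_cast; ring
    rw [h, Real.Gamma_add_one (by positivity), ih,
      Finset.prod_range_succ (fun i : ℕ => (1:ℝ)/2 + (i:ℝ)) (n+1)]
    push_cast
    ring

lemma gamma_pos (n : ℕ) : 0 < Real.Gamma ((n : ℝ) + 3 / 2) :=
  Real.Gamma_pos_of_pos (by positivity)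

lemma S_val (n : ℕ) :
    ∑ m ∈ range (n + 1), (-1 : ℝ) ^ m * (n.choose m : ℝ) / (2 * m + 1)
      = (Nat.factorial n : ℝ) * Real.sqrt π / (2 * Real.Gamma ((n : ℝ) + 3 / 2)) := by
  have e1 : ∑ m ∈ range (n + 1), (-1 : ℝ) ^ m * (n.choose m : ℝ) / (2 * m + 1)
      = (∑ m ∈ range (n + 1), (-1 : ℝ) ^ m * (n.choose m : ℝ) / ((1:ℝ)/2 + m)) / 2 := by
    rw [Finset.sum_div]
    refine Finset.sum_congr rfl fun m _ => ?_
    rw [div_div]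
    congr 1
    ring
  rw [e1, key_sum n (1/2) (by norm_num)]
  have hP : (0:ℝ) < ∏ i ∈ range (n + 1), ((1:ℝ)/2 + (i : ℝ)) :=
    Finset.prod_pos (fun i _ => by positivity)
  have hg := gamma_prod n
  have hs : (0:ℝ) < Real.sqrt π := Real.sqrt_pos.mpr Real.pi_pos
  rw [hg]
  field_simp

lemma int_pow (c : ℝ) (n : ℕ) :
    ∫ t in (0:ℝ)..c, (c ^ 2 - t ^ 2) ^ n
      = c ^ (2 * n + 1) * ∑ m ∈ range (n + 1), (-1 : ℝ) ^ m * (n.choose m : ℝ) / (2 * m + 1) := by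
  have expand : (fun t : ℝ => (c ^ 2 - t ^ 2) ^ n)
      = fun t => ∑ m ∈ range (n + 1),
          (-1 : ℝ) ^ (m + n) * (c ^ (2 * m)) * (n.choose m : ℝ) * t ^ (2 * (n - m)) := by
    funext t
    rw [sub_pow]
    refine Finset.sum_congr rfl fun m _ => ?_
    rw [show t ^ (2 * (n - m)) = (t ^ 2) ^ (n - m) by rw [pow_mul],
      show c ^ (2 * m) = (c ^ 2) ^ m by rw [pow_mul]]
    ring
  rw [expand, intervalIntegral.integral_finset_sum (fun m _ =>
    ((show Continuous (fun t : ℝ => (-1 : ℝ) ^ (m + n) * (c ^ (2 * m)) * (n.choose m : ℝ) * t ^ (2 * (n - m))) by fun_prop).intervalIntegrable 0 c))]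
  rw [← Finset.sum_range_reflect (fun m => (-1 : ℝ) ^ m * (n.choose m : ℝ) / (2 * m + 1)) (n + 1),
    Finset.mul_sum]
  refine Finset.sum_congr rfl fun m hm => ?_
  have hmn : m ≤ n := Nat.lt_succ_iff.mp (Finset.mem_range.mp hm)
  rw [intervalIntegral.integral_const_mul, integral_pow]
  have h1 : n + 1 - 1 - m = n - m := by omega
  rw [h1]
  have h2 : (-1 : ℝ) ^ (m + n) = (-1 : ℝ) ^ (n - m) := by
    rw [show m + n = (n - m) + 2 * m by omega, pow_add, pow_mul]
    norm_num
  have h3 : (n.choose (n - m) : ℝ) = (n.choose m : ℝ) := by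
    rw [Nat.choose_symm hmn]
  have h4 : c ^ (2 * m) * c ^ (2 * (n - m) + 1) = c ^ (2 * n + 1) := by
    rw [← pow_add]
    congr 1
    omega
  rw [h3, h2]
  push_cast
  rw [zero_pow (by omega)]
  field_simp
  rw [← h4]
  ring

lemma swap_sum (c : ℝ) (hc : 0 ≤ c) :
    HasSum (fun n : ℕ => (∫ t in (0:ℝ)..c, (c ^ 2 - t ^ 2) ^ n) / (Nat.factorial n : ℝ))
      (∫ t in (0:ℝ)..c, Real.exp (c ^ 2 - t ^ 2)) := by
  have h := intervalIntegral.hasSum_integral_of_dominated_convergence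
    (F := fun (n : ℕ) (t : ℝ) => (c ^ 2 - t ^ 2) ^ n / (Nat.factorial n : ℝ))
    (bound := fun (n : ℕ) (_ : ℝ) => (c ^ 2) ^ n / (Nat.factorial n : ℝ))
    (μ := volume) (a := 0) (b := c) (f := fun t => Real.exp (c ^ 2 - t ^ 2))
    (fun n => (((continuous_const.sub (continuous_pow 2)).pow n).div_const
        _).aestronglyMeasurable)
    (fun n => by
      filter_upwards with t ht
      rw [Set.uIoc_of_le hc] at ht
      have h1 : t ^ 2 ≤ c ^ 2 := by nlinarith [ht.1, ht.2]
      have h2 : (0:ℝ) ≤ t ^ 2 := sq_nonneg t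
      rw [norm_div, norm_pow, Real.norm_eq_abs, Real.norm_eq_abs,
        abs_of_nonneg (by positivity : (0:ℝ) ≤ (Nat.factorial n : ℝ))]
      gcongr
      rw [abs_le]
      constructor <;> nlinarith)
    (by filter_upwards with t _; exact (hasSum_exp' (c ^ 2)).summable)
    (by
      have : (fun _ : ℝ => ∑' n : ℕ, (c ^ 2) ^ n / (Nat.factorial n : ℝ))
          = fun _ : ℝ => Real.exp (c ^ 2) := by
        funext t; exact (hasSum_exp' (c ^ 2)).tsum_eq
      rw [this]
      exact intervalIntegrable_const)
    (by filter_upwards with t _; exact hasSum_exp' (c ^ 2 - t ^ 2))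
  simpa [intervalIntegral.integral_div] using h

lemma main_hasSum (ξ : ℝ) (hξ : 0 ≤ ξ) :
    HasSum (fun n : ℕ => ξ ^ ((n : ℝ) + 1 / 2) / Real.Gamma ((n : ℝ) + 3 / 2))
      (Real.exp ξ * ((2 / Real.sqrt π) *
        ∫ t in (0:ℝ)..Real.sqrt ξ, Real.exp (-t ^ 2))) := by
  set c := Real.sqrt ξ with hc
  have hc0 : 0 ≤ c := Real.sqrt_nonneg ξ
  have hc2 : c ^ 2 = ξ := Real.sq_sqrt hξ
  have hs : (0:ℝ) < Real.sqrt π := Real.sqrt_pos.mpr Real.pi_pos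
  have h := (swap_sum c hc0).mul_left (2 / Real.sqrt π)
  have hint : ∫ t in (0:ℝ)..c, Real.exp (c ^ 2 - t ^ 2)
      = Real.exp ξ * ∫ t in (0:ℝ)..c, Real.exp (-t ^ 2) := by
    rw [← intervalIntegral.integral_const_mul]
    refine intervalIntegral.integral_congr fun t _ => ?_
    rw [← Real.exp_add, hc2]
    ring_nf
  rw [hint] at h
  have hterm : ∀ n : ℕ, (2 / Real.sqrt π) *
      ((∫ t in (0:ℝ)..c, (c ^ 2 - t ^ 2) ^ n) / (Nat.factorial n : ℝ))
      = ξ ^ ((n : ℝ) + 1 / 2) / Real.Gamma ((n : ℝ) + 3 / 2) := by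
    intro n
    rw [int_pow, S_val]
    have hpow : c ^ (2 * n + 1) = ξ ^ ((n : ℝ) + 1 / 2) := by
      rw [← Real.rpow_natCast c (2 * n + 1), hc, Real.sqrt_eq_rpow,
        ← Real.rpow_mul hξ]
      congr 1
      push_cast
      ring
    rw [hpow]
    have hΓ := gamma_pos n
    have hfac : (0:ℝ) < (Nat.factorial n : ℝ) := by positivity
    field_simp
  have hfun : (fun n : ℕ => (2 / Real.sqrt π) *
      ((∫ t in (0:ℝ)..c, (c ^ 2 - t ^ 2) ^ n) / (Nat.factorial n : ℝ)))
      = fun n : ℕ => ξ ^ ((n : ℝ) + 1 / 2) / Real.Gamma ((n : ℝ) + 3 / 2) :=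
    funext hterm
  rw [hfun] at h
  convert h using 1
  · rfl
  ring

/-- `V*_{1/2}(ξ) = Σ_{k=1}^∞ ξ^k/k! − Σ_{k=1}^∞ ξ^{k+1/2}/Γ(k+3/2)`
(sums written over `k : ℕ` with the index shifted by one;
`ξ ^ (k + 1/2)` is the real power `Real.rpow`). -/
noncomputable def Vstar (ξ : ℝ) : ℝ :=
  (∑' k : ℕ, ξ ^ (k + 1) / (Nat.factorial (k + 1) : ℝ)) -
  ∑' k : ℕ, ξ ^ (((k : ℝ) + 1) + 1 / 2) / Real.Gamma (((k : ℝ) + 1) + 3 / 2)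

/-- `V*_{1/2}(ξ) = e^ξ · erfc(√ξ) − 1 + 2√(ξ/π)`, with the complementary error
function written as an explicit integral. -/
theorem stmt_4 (ξ : ℝ) (hξ : 0 ≤ ξ) :
    Vstar ξ =
      Real.exp ξ * (1 - (2 / Real.sqrt Real.pi) *
          ∫ t in (0 : ℝ)..Real.sqrt ξ, Real.exp (-t ^ 2)) -
        1 + (2 / Real.sqrt Real.pi) * Real.sqrt ξ := by
  have hs : (0:ℝ) < Real.sqrt π := Real.sqrt_pos.mpr Real.pi_pos
  -- exponential part
  have hA : HasSum (fun k : ℕ => ξ ^ (k + 1) / (Nat.factorial (k + 1) : ℝ))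
      (Real.exp ξ - 1) := by
    refine (hasSum_nat_add_iff (f := fun n : ℕ => ξ ^ n / (Nat.factorial n : ℝ)) 1).mpr ?_
    simpa using hasSum_exp' ξ
  -- gamma part
  have hmain := main_hasSum ξ hξ
  have hB : HasSum (fun k : ℕ => ξ ^ (((k : ℝ) + 1) + 1 / 2) / Real.Gamma (((k : ℝ) + 1) + 3 / 2))
      ((Real.exp ξ * ((2 / Real.sqrt π) * ∫ t in (0:ℝ)..Real.sqrt ξ, Real.exp (-t ^ 2)))
        - ξ ^ ((1:ℝ)/2) / Real.Gamma (3/2 : ℝ)) := by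
    have h := (hasSum_nat_add_iff'
      (f := fun n : ℕ => ξ ^ ((n : ℝ) + 1 / 2) / Real.Gamma ((n : ℝ) + 3 / 2)) 1).mpr hmain
    have e0 : ∑ i ∈ Finset.range 1,
        ξ ^ ((i : ℝ) + 1 / 2) / Real.Gamma ((i : ℝ) + 3 / 2)
        = ξ ^ ((1:ℝ)/2) / Real.Gamma (3/2 : ℝ) := by norm_num
    rw [e0] at h
    convert h using 2 with k
    · rfl
    push_cast
    norm_num
  have hΓ32 : Real.Gamma (3/2 : ℝ) = Real.sqrt π / 2 := by
    rw [show (3/2:ℝ) = 1/2 + 1 by norm_num, Real.Gamma_add_one (by norm_num),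
      Real.Gamma_one_half_eq]
    ring
  have hsq : ξ ^ ((1:ℝ)/2) = Real.sqrt ξ := (Real.sqrt_eq_rpow ξ).symm
  rw [Vstar, hA.tsum_eq, hB.tsum_eq, hΓ32, hsq]
  field_simp
  ring
end

section
/- The function V*_{1/2} is differentiable on (0, ∞), and for every ξ > 0 its derivative equals (V*_{1/2})'(ξ) = e^ξ·(1 − (2/√π)·∫_0^{√ξ} e^{−t²} dt). In particular (V*_{1/2})'(ξ) > 0 for all ξ > 0. -/
open Real Filter Set MeasureTheory Topology

noncomputable def trm (a : ℝ) (k : ℕ) (x : ℝ) : ℝ :=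
  x ^ ((k : ℝ) + a) / Real.Gamma ((k : ℝ) + a + 1)

lemma summable_trm {x a : ℝ} (hx : 0 < x) (ha : -1 < a) :
    Summable (fun k : ℕ => trm a k x) := by
  have hpos : ∀ k : ℕ, 0 < trm a k x := by
    intro k
    have h1 : (0:ℝ) < (k : ℝ) + a + 1 := by
      have : (0:ℝ) ≤ (k:ℝ) := Nat.cast_nonneg k
      linarith
    exact div_pos (Real.rpow_pos_of_pos hx _) (Real.Gamma_pos_of_pos h1)
  apply summable_of_ratio_test_tendsto_lt_one (l := 0) one_pos
  · exact Eventually.of_forall fun k => (hpos k).ne'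
  · have key : ∀ k : ℕ, ‖trm a (k+1) x‖ / ‖trm a k x‖ = x / ((k:ℝ) + a + 1) := by
      intro k
      have h1 : (0:ℝ) < (k : ℝ) + a + 1 := by
        have : (0:ℝ) ≤ (k:ℝ) := Nat.cast_nonneg k
        linarith
      have hΓ : Real.Gamma (((k+1:ℕ) : ℝ) + a + 1)
          = ((k:ℝ) + a + 1) * Real.Gamma ((k:ℝ) + a + 1) := by
        have : (((k+1:ℕ)) : ℝ) + a + 1 = ((k:ℝ) + a + 1) + 1 := by push_cast; ring
        rw [this, Real.Gamma_add_one h1.ne']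
      have hx1 : x ^ (((k+1:ℕ):ℝ) + a) = x ^ ((k:ℝ) + a) * x := by
        have : (((k+1:ℕ)):ℝ) + a = ((k:ℝ) + a) + 1 := by push_cast; ring
        rw [this, Real.rpow_add_one hx.ne']
      rw [Real.norm_eq_abs, Real.norm_eq_abs, abs_of_pos (hpos _), abs_of_pos (hpos _)]
      rw [trm, trm, hΓ, hx1]
      have hΓ0 : Real.Gamma ((k:ℝ) + a + 1) ≠ 0 := (Real.Gamma_pos_of_pos h1).ne'
      have hxk : x ^ ((k:ℝ) + a) ≠ 0 := (Real.rpow_pos_of_pos hx _).ne'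
      field_simp
    simp only [key]
    have h2 : Tendsto (fun k : ℕ => ((k:ℝ) + a + 1)) atTop atTop :=
      tendsto_atTop_add_const_right _ _ (tendsto_atTop_add_const_right _ _ tendsto_natCast_atTop_atTop)
    exact Tendsto.div_atTop tendsto_const_nhds h2

lemma hasDerivAt_trm {a : ℝ} (ha : 0 < a) (k : ℕ) {x : ℝ} (hx : 0 < x) :
    HasDerivAt (trm a k) (trm (a-1) k x) x := by
  have hka : (0:ℝ) < (k:ℝ) + a := by
    have : (0:ℝ) ≤ (k:ℝ) := Nat.cast_nonneg k
    linarith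
  have h1 : HasDerivAt (fun y : ℝ => y ^ ((k:ℝ) + a))
      (((k:ℝ) + a) * x ^ ((k:ℝ) + a - 1)) x :=
    Real.hasDerivAt_rpow_const (Or.inl hx.ne')
  have h2 := h1.div_const (Real.Gamma ((k:ℝ) + a + 1))
  refine h2.congr_deriv ?_
  have hΓ : Real.Gamma ((k:ℝ) + a + 1) = ((k:ℝ) + a) * Real.Gamma ((k:ℝ) + a) :=
    Real.Gamma_add_one hka.ne'
  have e1 : (k:ℝ) + (a - 1) = (k:ℝ) + a - 1 := by ring
  have e2 : (k:ℝ) + a - 1 + 1 = (k:ℝ) + a := by ring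
  rw [trm, e1, e2, hΓ]
  have hΓ0 : Real.Gamma ((k:ℝ) + a) ≠ 0 :=
    (Real.Gamma_pos_of_pos hka).ne'
  field_simp

noncomputable def Gfun (x : ℝ) : ℝ := ∑' k : ℕ, trm (1/2) k x

noncomputable def Efun (x : ℝ) : ℝ :=
  (2 / Real.sqrt Real.pi) * ∫ t in (0:ℝ)..Real.sqrt x, Real.exp (-t ^ 2)

-- monotone bound for trm with positive a
lemma trm_le {a : ℝ} (ha : 0 ≤ a) (k : ℕ) {x y : ℝ} (hx : 0 ≤ x) (hxy : x ≤ y) :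
    trm a k x ≤ trm a k y := by
  have h1 : (0:ℝ) < (k : ℝ) + a + 1 := by
    have : (0:ℝ) ≤ (k:ℝ) := Nat.cast_nonneg k
    linarith
  unfold trm
  have h2 := Real.Gamma_pos_of_pos h1
  gcongr

lemma trm_nonneg {a : ℝ} (k : ℕ) {x : ℝ} (hx : 0 ≤ x) (h1 : (0:ℝ) < (k : ℝ) + a + 1) :
    0 ≤ trm a k x :=
  div_nonneg (Real.rpow_nonneg hx _) (Real.Gamma_pos_of_pos h1).le

lemma hasDerivAt_W {ξ : ℝ} (hξ : 0 < ξ) :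
    HasDerivAt (fun x => ∑' k : ℕ, trm (3/2) k x) (Gfun ξ) ξ := by
  have h32 : trm ((3:ℝ)/2 - 1) = trm (1/2) := by norm_num
  have hmem : ξ ∈ Ioo (0:ℝ) (ξ+1) := ⟨hξ, by linarith⟩
  have := hasDerivAt_tsum_of_isPreconnected
    (u := fun k => trm (1/2) k (ξ+1))
    (summable_trm (by linarith) (by norm_num))
    isOpen_Ioo isPreconnected_Ioo
    (g := fun k x => trm (3/2) k x) (g' := fun k x => trm (1/2) k x)
    (fun n y hy => by
      have := hasDerivAt_trm (by norm_num : (0:ℝ) < 3/2) n hy.1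
      rwa [h32] at this)
    (fun n y hy => by
      rw [Real.norm_eq_abs, abs_of_nonneg (trm_nonneg n hy.1.le (by positivity))]
      exact trm_le (by norm_num) n hy.1.le hy.2.le)
    hmem (summable_trm hξ (by norm_num)) hmem
  exact this

lemma hasDerivAt_G {ξ : ℝ} (hξ : 0 < ξ) :
    HasDerivAt Gfun (∑' k : ℕ, trm (-(1/2)) k ξ) ξ := by
  have h12 : trm ((1:ℝ)/2 - 1) = trm (-(1/2)) := by norm_num
  have hmem : ξ ∈ Ioo (ξ/2) (ξ+1) := ⟨by linarith, by linarith⟩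
  have hC : (0:ℝ) < (ξ+1) * (ξ/2)⁻¹ := by positivity
  have := hasDerivAt_tsum_of_isPreconnected
    (u := fun k => ((ξ+1) * (ξ/2)⁻¹) * trm (-(1/2)) k (ξ+1))
    (((summable_trm (x := ξ+1) (by linarith) (by norm_num)).mul_left _))
    isOpen_Ioo isPreconnected_Ioo
    (g := fun k x => trm (1/2) k x) (g' := fun k x => trm (-(1/2)) k x)
    (fun n y hy => by
      have h0y : 0 < y := lt_trans (by linarith) hy.1
      have := hasDerivAt_trm (by norm_num : (0:ℝ) < 1/2) n h0y
      rwa [h12] at this)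
    (fun n y hy => by
      have h0y : 0 < y := lt_trans (by linarith) hy.1
      have hn2 : (0:ℝ) < (n:ℝ) + (-(1/2)) + 1 := by
        have := Nat.cast_nonneg (α := ℝ) n; linarith
      rw [Real.norm_eq_abs, abs_of_nonneg (trm_nonneg n h0y.le hn2)]
      have expand : ∀ z : ℝ, 0 < z →
          trm (-(1/2)) n z = z ^ ((n:ℝ) + 1/2) * z⁻¹ / Real.Gamma ((n:ℝ) + (-(1/2)) + 1) := by
        intro z hz
        rw [trm]
        congr 1
        rw [show (n:ℝ) + (-(1/2)) = ((n:ℝ) + 1/2) + (-1) by ring,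
          Real.rpow_add hz, Real.rpow_neg_one]
      have hR : (ξ+1) * (ξ/2)⁻¹ * trm (-(1/2)) n (ξ+1)
          = (ξ+1) ^ ((n:ℝ) + 1/2) * (ξ/2)⁻¹ / Real.Gamma ((n:ℝ) + (-(1/2)) + 1) := by
        have h1 : (ξ+1) ≠ 0 := by linarith
        rw [expand (ξ+1) (by linarith)]
        calc (ξ+1) * (ξ/2)⁻¹ * ((ξ+1) ^ ((n:ℝ) + 1/2) * (ξ+1)⁻¹ / Real.Gamma ((n:ℝ) + (-(1/2)) + 1))
            = ((ξ+1) * (ξ+1)⁻¹) * ((ξ+1) ^ ((n:ℝ) + 1/2) * (ξ/2)⁻¹ / Real.Gamma ((n:ℝ) + (-(1/2)) + 1)) := by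
              ring
          _ = (ξ+1) ^ ((n:ℝ) + 1/2) * (ξ/2)⁻¹ / Real.Gamma ((n:ℝ) + (-(1/2)) + 1) := by
              rw [mul_inv_cancel₀ h1, one_mul]
      show trm (-(1/2)) n y ≤ (ξ+1) * (ξ/2)⁻¹ * trm (-(1/2)) n (ξ+1)
      rw [expand y h0y, hR]
      have hΓ := Real.Gamma_pos_of_pos hn2
      gcongr
      all_goals first
        | exact h0y
        | exact hy.1.le
        | exact hy.2.le
        | exact Real.rpow_le_rpow h0y.le hy.2.le (by positivity))
    hmem (summable_trm hξ (by norm_num)) hmem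
  exact this

lemma tsum_neg_half {ξ : ℝ} (hξ : 0 < ξ) :
    ∑' k : ℕ, trm (-(1/2)) k ξ = 1 / (Real.sqrt Real.pi * Real.sqrt ξ) + Gfun ξ := by
  rw [Summable.tsum_eq_zero_add (summable_trm hξ (by norm_num))]
  congr 1
  · show trm (-(1/2)) 0 ξ = _
    rw [trm]
    rw [show ((0:ℕ):ℝ) + (-(1/2)) + 1 = 1/2 by norm_num,
        show ((0:ℕ):ℝ) + (-(1/2)) = -(1/2) by norm_num]
    rw [Real.Gamma_one_half_eq, Real.rpow_neg hξ.le, ← Real.sqrt_eq_rpow]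
    rw [div_eq_mul_inv, one_div, mul_inv]
    ring
  · apply tsum_congr
    intro k
    rw [trm, trm,
      show ((k+1:ℕ):ℝ) + (-(1/2)) = (k:ℝ) + 1/2 by push_cast; ring,
      show ((k:ℝ) + 1/2) + 1 = (k:ℝ) + 1/2 + 1 by ring]

lemma hasDerivAt_E {ξ : ℝ} (hξ : 0 < ξ) :
    HasDerivAt Efun (Real.exp (-ξ) / (Real.sqrt Real.pi * Real.sqrt ξ)) ξ := by
  have hcont : Continuous fun t : ℝ => Real.exp (-t ^ 2) := by continuity
  have hsq : Real.sqrt ξ ^ 2 = ξ := Real.sq_sqrt hξ.le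
  have h1 : HasDerivAt (fun u => ∫ t in (0:ℝ)..u, Real.exp (-t ^ 2))
      (Real.exp (-(Real.sqrt ξ) ^ 2)) (Real.sqrt ξ) :=
    intervalIntegral.integral_hasDerivAt_right (hcont.intervalIntegrable _ _)
      (hcont.stronglyMeasurable.stronglyMeasurableAtFilter) hcont.continuousAt
  have h2 : HasDerivAt Real.sqrt (1 / (2 * Real.sqrt ξ)) ξ := Real.hasDerivAt_sqrt hξ.ne'
  have h3 := (h1.comp ξ h2).const_mul (2 / Real.sqrt Real.pi)
  have hE : Efun = fun x => (2 / Real.sqrt Real.pi) *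
      ((fun u => ∫ t in (0:ℝ)..u, Real.exp (-t ^ 2)) (Real.sqrt x)) := rfl
  rw [hE]
  refine h3.congr_deriv ?_
  rw [hsq]
  have hπ : Real.sqrt Real.pi ≠ 0 := by
    positivity
  have hsξ : Real.sqrt ξ ≠ 0 := by positivity
  field_simp

noncomputable def Hfun (x : ℝ) : ℝ := Real.exp (-x) * Gfun x - Efun x

lemma hasDerivAt_H {ξ : ℝ} (hξ : 0 < ξ) : HasDerivAt Hfun 0 ξ := by
  have hG := hasDerivAt_G hξ
  rw [tsum_neg_half hξ] at hG
  have hexp : HasDerivAt (fun x => Real.exp (-x)) (-Real.exp (-ξ)) ξ := by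
    have := (Real.hasDerivAt_exp (-ξ)).comp ξ (hasDerivAt_neg ξ)
    simpa [Function.comp_def] using this
  have hprod := hexp.mul hG
  have hE := hasDerivAt_E hξ
  have := hprod.sub hE
  refine this.congr_deriv ?_
  have hπ : Real.sqrt Real.pi ≠ 0 := by positivity
  have hsξ : Real.sqrt ξ ≠ 0 := by positivity
  field_simp
  ring

lemma continuousOn_G {b : ℝ} (hb : 0 < b) : ContinuousOn Gfun (Icc (0:ℝ) b) := by
  apply continuousOn_tsum (u := fun k => trm (1/2) k b)
  · intro i
    apply ContinuousOn.div_const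
    intro x hx
    exact (Real.continuousAt_rpow_const x _ (Or.inr (by positivity))).continuousWithinAt
  · exact summable_trm hb (by norm_num)
  · intro n x hx
    rw [Real.norm_eq_abs, abs_of_nonneg (trm_nonneg n hx.1 (by positivity))]
    exact trm_le (by norm_num) n hx.1 hx.2

lemma G_zero : Gfun 0 = 0 := by
  rw [Gfun]
  convert tsum_zero with k
  rw [trm, Real.zero_rpow (by positivity), zero_div]

lemma E_zero : Efun 0 = 0 := by
  rw [Efun, Real.sqrt_zero, intervalIntegral.integral_same, mul_zero]

lemma continuous_E : Continuous Efun := by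
  have hcont : Continuous fun t : ℝ => Real.exp (-t ^ 2) := by continuity
  exact continuous_const.mul
    ((intervalIntegral.continuous_primitive
      (fun a b => hcont.intervalIntegrable a b) 0).comp Real.continuous_sqrt)

lemma key_identity {x : ℝ} (hx : 0 < x) : Real.exp (-x) * Gfun x = Efun x := by
  have hconst : ∀ z ∈ Ioi (0:ℝ), Hfun z = Hfun x := by
    intro z hz
    apply (convex_Ioi (0:ℝ)).is_const_of_fderivWithin_eq_zero (𝕜 := ℝ)
      (f := Hfun) ?_ ?_ hz hx
    · intro w hw
      exact ((hasDerivAt_H hw).differentiableAt).differentiableWithinAt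
    · intro w hw
      rw [fderivWithin_of_isOpen isOpen_Ioi hw, (hasDerivAt_H hw).hasFDerivAt.fderiv]
      ext v
      simp
  -- continuity of Hfun at 0 within (0, x+1]
  have hHcont : ContinuousWithinAt Hfun (Icc (0:ℝ) (x+1)) 0 := by
    have h1 : ContinuousOn Hfun (Icc (0:ℝ) (x+1)) := by
      apply ContinuousOn.sub
      · exact ((Real.continuous_exp.comp continuous_neg).continuousOn).mul
          (continuousOn_G (by linarith))
      · exact continuous_E.continuousOn
    exact h1 0 ⟨le_refl _, by linarith⟩
  have hmem : Icc (0:ℝ) (x+1) ∈ 𝓝[Ioi (0:ℝ)] (0:ℝ) := by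
    apply mem_nhdsWithin.mpr
    exact ⟨Iio (x+1), isOpen_Iio, by simpa using by linarith,
      fun y hy => ⟨le_of_lt hy.2, le_of_lt hy.1⟩⟩
  have htend : Tendsto Hfun (𝓝[Ioi (0:ℝ)] 0) (𝓝 (Hfun 0)) :=
    hHcont.mono_of_mem_nhdsWithin hmem
  have htend2 : Tendsto Hfun (𝓝[Ioi (0:ℝ)] 0) (𝓝 (Hfun x)) := by
    apply Tendsto.congr' _ (tendsto_const_nhds (α := ℝ))
    filter_upwards [self_mem_nhdsWithin] with z hz
    exact (hconst z hz).symm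
  have h0 : Hfun 0 = 0 := by
    rw [Hfun, G_zero, E_zero, mul_zero, sub_zero]
  have heq : Hfun 0 = Hfun x := tendsto_nhds_unique htend htend2
  have hHx : Hfun x = 0 := by rw [← heq, h0]
  unfold Hfun at hHx
  exact sub_eq_zero.mp hHx

lemma Efun_lt_one {ξ : ℝ} (hξ : 0 < ξ) : Efun ξ < 1 := by
  have hcont : Continuous fun t : ℝ => Real.exp (-t ^ 2) := by continuity
  have hInt : Integrable (fun t : ℝ => Real.exp (-t ^ 2)) := by
    have := integrable_exp_neg_mul_sq (b := 1) one_pos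
    simpa using this
  have htot : ∫ t in Ioi (0:ℝ), Real.exp (-t ^ 2) = Real.sqrt Real.pi / 2 := by
    have := integral_gaussian_Ioi 1
    simpa using this
  have hsplit : (∫ t in Ioc (0:ℝ) (Real.sqrt ξ), Real.exp (-t ^ 2))
      + ∫ t in Ioi (Real.sqrt ξ), Real.exp (-t ^ 2)
      = ∫ t in Ioi (0:ℝ), Real.exp (-t ^ 2) := by
    rw [← MeasureTheory.setIntegral_union Ioc_disjoint_Ioi_same measurableSet_Ioi
      hInt.integrableOn hInt.integrableOn,
      Ioc_union_Ioi_eq_Ioi (Real.sqrt_nonneg ξ)]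
  have htail : 0 < ∫ t in Ioi (Real.sqrt ξ), Real.exp (-t ^ 2) := by
    rw [setIntegral_pos_iff_support_of_nonneg_ae
      (Eventually.of_forall fun t => (Real.exp_pos _).le) hInt.integrableOn]
    have : Function.support (fun t : ℝ => Real.exp (-t ^ 2)) = Set.univ := by
      ext t; simp [(Real.exp_pos _).ne']
    rw [this, Set.univ_inter]
    simp [Real.sqrt_lt_sqrt]
  have hI : (∫ t in (0:ℝ)..Real.sqrt ξ, Real.exp (-t ^ 2)) < Real.sqrt Real.pi / 2 := by
    rw [intervalIntegral.integral_of_le (Real.sqrt_nonneg ξ)]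
    linarith [hsplit, htail, htot.symm ▸ hsplit]
  have hπ : 0 < Real.sqrt Real.pi := Real.sqrt_pos.mpr Real.pi_pos
  have := mul_lt_mul_of_pos_left hI (by positivity : (0:ℝ) < 2 / Real.sqrt Real.pi)
  calc Efun ξ < (2 / Real.sqrt Real.pi) * (Real.sqrt Real.pi / 2) := this
    _ = 1 := by field_simp

lemma Efun_def (x : ℝ) : Efun x =
    (2 / Real.sqrt Real.pi) * ∫ t in (0:ℝ)..Real.sqrt x, Real.exp (-t ^ 2) := rfl

lemma Vstar_eq : Vstar = fun x => (Real.exp x - 1) - ∑' k : ℕ, trm (3/2) k x := by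
  funext x
  rw [Vstar]
  congr 1
  · have hsum : Summable (fun n : ℕ => x ^ n / (n.factorial : ℝ)) :=
      Real.summable_pow_div_factorial x
    have hexp : Real.exp x = ∑' n : ℕ, x ^ n / (n.factorial : ℝ) := by
      rw [Real.exp_eq_exp_ℝ, NormedSpace.exp_eq_tsum_div]
    rw [hexp, Summable.tsum_eq_zero_add hsum]
    simp
  · apply tsum_congr
    intro k
    rw [trm, show ((k:ℝ) + 3/2) = ((k:ℝ) + 1) + 1/2 by ring,
      show ((k:ℝ) + 1) + 1/2 + 1 = ((k:ℝ) + 1) + 3/2 by ring]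

/-- `V*_{1/2}` is differentiable on `(0, ∞)` with derivative
`e^ξ · erfc(√ξ)`, which is positive. -/
theorem stmt_5 :
    ∀ ξ > (0 : ℝ),
      HasDerivAt Vstar
        (Real.exp ξ * (1 - (2 / Real.sqrt Real.pi) *
          ∫ t in (0 : ℝ)..Real.sqrt ξ, Real.exp (-t ^ 2))) ξ ∧
      0 < deriv Vstar ξ := by
  intro ξ hξ
  have hW := hasDerivAt_W hξ
  have hV : HasDerivAt Vstar (Real.exp ξ - Gfun ξ) ξ := by
    rw [Vstar_eq]
    exact ((Real.hasDerivAt_exp ξ).sub_const 1).sub hW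
  have hkey := key_identity hξ
  have hGval : Gfun ξ = Real.exp ξ * Efun ξ := by
    rw [← hkey, ← mul_assoc, ← Real.exp_add, add_neg_cancel, Real.exp_zero, one_mul]
  have hD : Real.exp ξ - Gfun ξ = Real.exp ξ * (1 - Efun ξ) := by
    rw [hGval]; ring
  have hV2 : HasDerivAt Vstar
      (Real.exp ξ * (1 - (2 / Real.sqrt Real.pi) *
        ∫ t in (0 : ℝ)..Real.sqrt ξ, Real.exp (-t ^ 2))) ξ := by
    rw [← Efun_def, ← hD]
    exact hV
  refine ⟨hV2, ?_⟩
  rw [hV2.deriv, ← Efun_def]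
  have := Efun_lt_one hξ
  have hexp := Real.exp_pos ξ
  nlinarith
end

section
/- The function V*_{1/2} is strictly increasing on [0, ∞), and V*_{1/2}(ξ) > 0 for every ξ > 0 (while V*_{1/2}(0) = 0). Consequently, for every ε > 0 the quantity θ = −1/V*_{1/2}(1/ε²) is well defined. -/
open Real MeasureTheory Set Filter Nat intervalIntegral

namespace VP


/-- the shifted exponential series -/
lemma summable_aser (x : ℝ) : Summable (fun k : ℕ => x ^ (k+1) / (k+1)! : ℕ → ℝ) := by
  have := Real.summable_pow_div_factorial x
  exact (this.comp_injective Nat.succ_injective)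

lemma exp_shift (x : ℝ) : (∑' k : ℕ, x ^ (k+1) / (k+1)! : ℝ) = Real.exp x - 1 := by
  have h : Real.exp x = ∑' n : ℕ, x ^ n / n ! := by
    rw [Real.exp_eq_exp_ℝ, NormedSpace.exp_eq_tsum_div]
  rw [h, Summable.tsum_eq_zero_add (Real.summable_pow_div_factorial x)]
  simp

lemma Gamma_three_half : Real.Gamma (3/2) = Real.sqrt π / 2 := by
  have h : (3/2 : ℝ) = 1/2 + 1 := by norm_num
  rw [h, Real.Gamma_add_one (by norm_num), Real.Gamma_one_half_eq]
  ring

lemma Gamma_pos_shift (k : ℕ) : 0 < Real.Gamma ((k:ℝ) + 3/2) :=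
  Real.Gamma_pos_of_pos (by positivity)

lemma Gamma_rec (k : ℕ) :
    Real.Gamma (((k:ℕ)+1 : ℕ) + 3/2 : ℝ) = ((k:ℝ) + 3/2) * Real.Gamma ((k:ℝ) + 3/2) := by
  have h : (((k:ℕ)+1 : ℕ) : ℝ) + 3/2 = ((k:ℝ) + 3/2) + 1 := by push_cast; ring
  rw [h, Real.Gamma_add_one (by positivity)]

lemma Gamma_ge_factorial (k : ℕ) : ((k+1)! : ℝ) ≤ Real.Gamma ((k:ℝ) + 1 + 3/2) := by
  induction k with
  | zero =>
    rw [show ((0:ℕ):ℝ) + 1 + 3/2 = 3/2 + 1 by norm_num, Real.Gamma_add_one (by norm_num), Gamma_three_half]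
    have hpi : (3:ℝ) < π := Real.pi_gt_three
    have h2 : (16/9 : ℝ) ≤ π := by linarith
    have := Real.sqrt_le_sqrt h2
    rw [show Real.sqrt (16/9) = 4/3 by
      rw [show (16/9:ℝ) = (4/3)^2 by norm_num, Real.sqrt_sq (by norm_num)]] at this
    simp only [Nat.factorial]
    norm_num
    nlinarith
  | succ n ih =>
    have h : ((n:ℝ) + 1 + 1 + 3/2) = ((n:ℝ) + 1 + 3/2) + 1 := by ring
    rw [show (((n+1):ℕ):ℝ) + 1 + 3/2 = ((n:ℝ)+1+3/2) + 1 by push_cast; ring,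
      Real.Gamma_add_one (by positivity)]
    have h1 : ((n+2)! : ℝ) = ((n:ℝ)+2) * (n+1)! := by
      rw [show n+2 = (n+1)+1 from rfl, Nat.factorial_succ]; push_cast; ring
    rw [show n+1+1 = n+2 from rfl, h1]
    have hpos : (0:ℝ) < (n+1)! := by positivity
    nlinarith [ih, Real.Gamma_pos_of_pos (show (0:ℝ) < (n:ℝ)+1+3/2 by positivity)]



lemma J_rec (ξ : ℝ) (hξ : 0 < ξ) (k : ℕ) :
    (2*(k:ℝ)+3) * ∫ s in (0:ℝ)..Real.sqrt ξ, (ξ - s^2)^(k+1)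
      = 2*((k:ℝ)+1)*ξ * ∫ s in (0:ℝ)..Real.sqrt ξ, (ξ - s^2)^k := by
  set c := Real.sqrt ξ with hc
  have hc2 : c^2 = ξ := Real.sq_sqrt hξ.le
  have hderiv : ∀ s : ℝ, HasDerivAt (fun s : ℝ => s * (ξ - s^2)^(k+1))
      ((2*(k:ℝ)+3) * (ξ - s^2)^(k+1) - 2*((k:ℝ)+1)*ξ * (ξ - s^2)^k) s := by
    intro s
    have h1 : HasDerivAt (fun s : ℝ => ξ - s^2) (-(2*s)) s := by
      simpa using ((hasDerivAt_pow 2 s).const_sub ξ)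
    have h2 : HasDerivAt (fun s : ℝ => (ξ - s^2)^(k+1))
        ((k+1 : ℕ) * (ξ - s^2)^k * (-(2*s))) s := by
      simpa using h1.fun_pow (k+1)
    have h3 := (hasDerivAt_id s).mul h2
    simp only [id_eq] at h3
    refine h3.congr_deriv ?_
    push_cast
    ring
  have hint1 : IntervalIntegrable (fun s : ℝ => (ξ - s^2)^(k+1)) volume 0 c :=
    (by continuity : Continuous fun s : ℝ => (ξ - s^2)^(k+1)).intervalIntegrable 0 c
  have hint0 : IntervalIntegrable (fun s : ℝ => (ξ - s^2)^k) volume 0 c :=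
    (by continuity : Continuous fun s : ℝ => (ξ - s^2)^k).intervalIntegrable 0 c
  have hFTC := intervalIntegral.integral_eq_sub_of_hasDerivAt
    (f := fun s : ℝ => s * (ξ - s^2)^(k+1))
    (fun s _ => hderiv s)
    (((hint1.const_mul _).sub (hint0.const_mul _)))
  have hzero : c * (ξ - c^2)^(k+1) - 0 * (ξ - 0^2)^(k+1) = 0 := by
    rw [hc2]; simp
  rw [hzero] at hFTC
  rw [intervalIntegral.integral_sub (hint1.const_mul _) (hint0.const_mul _),
    intervalIntegral.integral_const_mul, intervalIntegral.integral_const_mul] at hFTC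
  linarith

lemma J_val (ξ : ℝ) (hξ : 0 < ξ) : ∀ k : ℕ,
    (∫ s in (0:ℝ)..Real.sqrt ξ, (ξ - s^2)^k)
      = (Real.sqrt π / 2) * (k)! * ξ ^ ((k:ℝ) + 1/2) / Real.Gamma ((k:ℝ) + 3/2) := by
  intro k
  induction k with
  | zero =>
    simp only [pow_zero, Nat.cast_zero, zero_add, Nat.factorial_zero, Nat.cast_one, mul_one]
    rw [intervalIntegral.integral_const, smul_eq_mul, sub_zero, mul_one]
    rw [Gamma_three_half, ← Real.sqrt_eq_rpow]
    have h : Real.sqrt π / 2 ≠ 0 := by positivity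
    field_simp
  | succ n ih =>
    have hrec := J_rec ξ hξ n
    rw [ih] at hrec
    have h23 : (2*(n:ℝ)+3) ≠ 0 := by positivity
    have heq : (∫ s in (0:ℝ)..Real.sqrt ξ, (ξ - s^2)^(n+1))
        = 2*((n:ℝ)+1)*ξ * ((Real.sqrt π / 2) * (n)! * ξ ^ ((n:ℝ) + 1/2) / Real.Gamma ((n:ℝ) + 3/2)) / (2*(n:ℝ)+3) := by
      field_simp at hrec ⊢
      linarith
    rw [heq, Gamma_rec n]
    have hfact : (((n+1))! : ℝ) = ((n:ℝ)+1) * (n)! := by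
      rw [Nat.factorial_succ]; push_cast; ring
    rw [show (((n+1):ℕ):ℝ) + 1/2 = ((n:ℝ)+1/2) + 1 by push_cast; ring,
      Real.rpow_add_one hξ.ne', hfact]
    have hG : Real.Gamma ((n:ℝ) + 3/2) ≠ 0 := (Gamma_pos_shift n).ne'
    set A := ξ ^ ((n:ℝ)+1/2) with hA
    have h2 : ((n:ℝ)+3/2) ≠ 0 := by positivity
    field_simp




noncomputable def E (t : ℝ) : ℝ := ∫ s in (0:ℝ)..t, Real.exp (-(s^2))

lemma contG : Continuous fun s : ℝ => Real.exp (-(s^2)) := by continuity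

lemma integrableG : Integrable (fun s : ℝ => Real.exp (-(s^2))) := by
  have := integrable_exp_neg_mul_sq (b := (1:ℝ)) one_pos
  simpa using this

lemma continuous_E : Continuous E :=
  intervalIntegral.continuous_primitive (fun a b => contG.intervalIntegrable a b) 0

lemma hasDerivAt_E (t : ℝ) : HasDerivAt E (Real.exp (-(t^2))) t :=
  intervalIntegral.integral_hasDerivAt_right (contG.intervalIntegrable _ _)
    (contG.stronglyMeasurableAtFilter _ _) contG.continuousAt

lemma E_zero : E 0 = 0 := intervalIntegral.integral_same

lemma gauss_Ioi : ∫ s in Ioi (0:ℝ), Real.exp (-(s^2)) = Real.sqrt π / 2 := by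
  have := integral_gaussian_Ioi (1:ℝ)
  simpa using this

lemma E_lt (t : ℝ) : E t < Real.sqrt π / 2 := by
  have hpi : 0 < Real.sqrt π := Real.sqrt_pos.2 Real.pi_pos
  rcases le_or_gt t 0 with ht | ht
  · have : E t ≤ 0 := by
      rw [E, intervalIntegral.integral_symm]
      simp only [neg_nonpos]
      exact intervalIntegral.integral_nonneg ht (fun s _ => (Real.exp_pos _).le)
    linarith
  · have hsplit : (∫ s in Ioi (0:ℝ), Real.exp (-(s^2)))
        = (∫ s in Ioc (0:ℝ) t, Real.exp (-(s^2))) + ∫ s in Ioi t, Real.exp (-(s^2)) := by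
      rw [← Set.Ioc_union_Ioi_eq_Ioi ht.le]
      exact setIntegral_union (Set.Ioc_disjoint_Ioi le_rfl) measurableSet_Ioi
        integrableG.integrableOn integrableG.integrableOn
    have hE : E t = ∫ s in Ioc (0:ℝ) t, Real.exp (-(s^2)) := by
      rw [E, intervalIntegral.integral_of_le ht.le]
    have hpos : 0 < ∫ s in Ioi t, Real.exp (-(s^2)) := by
      rw [setIntegral_pos_iff_support_of_nonneg_ae
        (Filter.Eventually.of_forall (fun s => (Real.exp_pos _).le)) integrableG.integrableOn]
      have : Function.support (fun s : ℝ => Real.exp (-(s^2))) = Set.univ := by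
        ext s; simp [Function.mem_support, (Real.exp_pos _).ne']
      rw [this, Set.univ_inter]
      simp [Real.volume_Ioi]
    rw [hE]
    rw [← gauss_Ioi]
    linarith [hsplit, hpos]





lemma bterm_eq (ξ : ℝ) (hξ : 0 < ξ) (k : ℕ) :
    ξ ^ (((k:ℝ) + 1) + 1/2) / Real.Gamma (((k:ℝ) + 1) + 3/2)
      = (2 / Real.sqrt π) * ∫ s in (0:ℝ)..Real.sqrt ξ, (ξ - s^2)^(k+1) / ((k+1)! : ℝ) := by
  have hJ := J_val ξ hξ (k+1)
  rw [intervalIntegral.integral_div, hJ]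
  push_cast
  have hG : (0:ℝ) < Real.Gamma ((k:ℝ) + 1 + 3/2) := Real.Gamma_pos_of_pos (by positivity)
  have hf : ((k+1)! : ℝ) ≠ 0 := by positivity
  have hs : Real.sqrt π ≠ 0 := by positivity
  rw [show ((k:ℝ) + 1) + 1/2 = (k:ℝ) + 1 + 1/2 by ring, show ((k:ℝ) + 1) + 3/2 = (k:ℝ) + 1 + 3/2 by ring]
  push_cast at hf
  field_simp

lemma rpow_split (ξ : ℝ) (hξ : 0 < ξ) (k : ℕ) :
    ξ ^ (((k:ℝ) + 1) + 1/2) = ξ ^ (k+1) * Real.sqrt ξ := by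
  rw [show ((k:ℝ) + 1) + 1/2 = (((k+1 : ℕ)):ℝ) + 1/2 by push_cast; ring,
    Real.rpow_add hξ, Real.rpow_natCast, Real.sqrt_eq_rpow]

lemma summable_bterm (ξ : ℝ) (hξ : 0 < ξ) :
    Summable (fun k : ℕ => ξ ^ (((k:ℝ) + 1) + 1/2) / Real.Gamma (((k:ℝ) + 1) + 3/2)) := by
  have hmaj : Summable (fun k : ℕ => Real.sqrt ξ * (ξ ^ (k+1) / ((k+1)! : ℝ))) :=
    (summable_aser ξ).mul_left _
  apply Summable.of_nonneg_of_le _ _ hmaj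
  · intro k
    have := Real.Gamma_pos_of_pos (show (0:ℝ) < (k:ℝ) + 1 + 3/2 by positivity)
    rw [show ((k:ℝ) + 1) + 3/2 = (k:ℝ) + 1 + 3/2 by ring]
    positivity
  · intro k
    rw [rpow_split ξ hξ k, show ((k:ℝ) + 1) + 3/2 = (k:ℝ) + 1 + 3/2 by ring,
      show Real.sqrt ξ * (ξ ^ (k+1) / ((k+1)! : ℝ)) = ξ ^ (k+1) * Real.sqrt ξ / ((k+1)! : ℝ) by ring]
    gcongr
    exact Gamma_ge_factorial k


lemma tsum_b (ξ : ℝ) (hξ : 0 < ξ) :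
    (∑' k : ℕ, ξ ^ (((k:ℝ) + 1) + 1/2) / Real.Gamma (((k:ℝ) + 1) + 3/2))
      = (2 / Real.sqrt π) * (Real.exp ξ * E (Real.sqrt ξ) - Real.sqrt ξ) := by
  set c := Real.sqrt ξ with hc
  have hc0 : 0 ≤ c := Real.sqrt_nonneg ξ
  set f : ℕ → ℝ → ℝ := fun k s => (ξ - s^2)^(k+1) / ((k+1)! : ℝ) with hf
  have hcont : ∀ k, Continuous (f k) := by
    intro k
    exact (Continuous.pow (by continuity) (k+1)).div_const _
  have hnn : ∀ k : ℕ, ∀ s ∈ Ioc (0:ℝ) c, 0 ≤ f k s := by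
    intro k s hs
    have hs2 : s^2 ≤ ξ := by
      have := hs.2
      nlinarith [Real.sq_sqrt hξ.le, hs.1]
    have : (0:ℝ) ≤ ξ - s^2 := by linarith
    positivity
  have hIval : ∀ k : ℕ, (∫ s in Ioc (0:ℝ) c, f k s)
      = (Real.sqrt π / 2) * (ξ ^ (((k:ℝ) + 1) + 1/2) / Real.Gamma (((k:ℝ) + 1) + 3/2)) := by
    intro k
    rw [← intervalIntegral.integral_of_le hc0]
    simp only [hf]
    rw [bterm_eq ξ hξ k]
    have hs : Real.sqrt π ≠ 0 := by positivity
    set I := ∫ s in (0:ℝ)..c, (ξ - s^2)^(k+1) / ((k+1)! : ℝ) with hI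
    field_simp
  -- interchange
  have hswap : (∑' k : ℕ, ∫ s in Ioc (0:ℝ) c, f k s)
      = ∫ s in Ioc (0:ℝ) c, (∑' k : ℕ, f k s) := by
    refine (MeasureTheory.integral_tsum (fun k => (hcont k).aestronglyMeasurable) ?_).symm
    have hlin : ∀ k : ℕ, (∫⁻ s in Ioc (0:ℝ) c, ‖f k s‖ₑ)
        = ENNReal.ofReal (∫ s in Ioc (0:ℝ) c, f k s) := by
      intro k
      rw [MeasureTheory.ofReal_integral_eq_lintegral_ofReal
        ((hcont k).integrableOn_Ioc)
        ((ae_restrict_iff' measurableSet_Ioc).2 (Eventually.of_forall (hnn k)))]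
      refine MeasureTheory.setLIntegral_congr_fun measurableSet_Ioc
        (fun s hs => ?_)
      rw [Real.enorm_eq_ofReal (hnn k s hs)]
    simp only [hlin, hIval]
    rw [← ENNReal.ofReal_tsum_of_nonneg]
    · exact ENNReal.ofReal_ne_top
    · intro k
      have h1 := Real.Gamma_pos_of_pos (show (0:ℝ) < (k:ℝ) + 1 + 3/2 by positivity)
      rw [show ((k:ℝ) + 1) + 3/2 = (k:ℝ) + 1 + 3/2 by ring]
      positivity
    · exact (summable_bterm ξ hξ).mul_left _
  have hsum_eq : ∀ s : ℝ, (∑' k : ℕ, f k s) = Real.exp (ξ - s^2) - 1 := by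
    intro s
    simpa using exp_shift (ξ - s^2)
  calc (∑' k : ℕ, ξ ^ (((k:ℝ) + 1) + 1/2) / Real.Gamma (((k:ℝ) + 1) + 3/2))
      = ∑' k : ℕ, (2 / Real.sqrt π) * ∫ s in Ioc (0:ℝ) c, f k s := by
        refine tsum_congr fun k => ?_
        rw [hIval k]
        have hs : Real.sqrt π ≠ 0 := by positivity
        set B := ξ ^ (((k:ℝ) + 1) + 1/2) / Real.Gamma (((k:ℝ) + 1) + 3/2) with hB
        field_simp
    _ = (2 / Real.sqrt π) * ∑' k : ℕ, ∫ s in Ioc (0:ℝ) c, f k s := tsum_mul_left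
    _ = (2 / Real.sqrt π) * ∫ s in Ioc (0:ℝ) c, (∑' k : ℕ, f k s) := by rw [hswap]
    _ = (2 / Real.sqrt π) * ∫ s in Ioc (0:ℝ) c, (Real.exp ξ * Real.exp (-(s^2)) - 1) := by
        congr 1
        refine MeasureTheory.integral_congr_ae (Eventually.of_forall fun s => ?_)
        simp only [hsum_eq]
        rw [show ξ - s^2 = ξ + -(s^2) by ring, Real.exp_add]
    _ = (2 / Real.sqrt π) * (Real.exp ξ * E c - c) := by
        congr 1
        rw [← intervalIntegral.integral_of_le hc0]
        have h1 : IntervalIntegrable (fun s : ℝ => Real.exp ξ * Real.exp (-(s^2))) volume 0 c :=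
          ((by continuity : Continuous fun s : ℝ => Real.exp ξ * Real.exp (-(s^2)))).intervalIntegrable 0 c
        rw [intervalIntegral.integral_sub h1 intervalIntegrable_const,
          intervalIntegral.integral_const_mul, intervalIntegral.integral_const]
        simp [E]





noncomputable def F (x : ℝ) : ℝ :=
  Real.exp x - 1 - (2 / Real.sqrt π) * (Real.exp x * E (Real.sqrt x) - Real.sqrt x)

lemma Vstar_zero : Vstar 0 = 0 := by
  rw [Vstar]
  have h1 : (∑' k : ℕ, (0:ℝ) ^ (k + 1) / (Nat.factorial (k + 1) : ℝ)) = 0 := by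
    convert tsum_zero with k
    simp [pow_succ]
  have h2 : (∑' k : ℕ, (0:ℝ) ^ (((k : ℝ) + 1) + 1 / 2) / Real.Gamma (((k : ℝ) + 1) + 3 / 2)) = 0 := by
    convert tsum_zero with k
    rw [Real.zero_rpow (by positivity)]
    simp
  rw [h1, h2]; ring

lemma Vstar_eq (ξ : ℝ) (hξ : 0 ≤ ξ) : Vstar ξ = F ξ := by
  rcases eq_or_lt_of_le hξ with h | h
  · rw [← h, Vstar_zero, F]
    simp [E_zero]
  · rw [Vstar, F, exp_shift, tsum_b ξ h]

lemma hasDerivAt_F (x : ℝ) (hx : 0 < x) :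
    HasDerivAt F (Real.exp x * (1 - (2 / Real.sqrt π) * E (Real.sqrt x))) x := by
  have hsqrt_pos : 0 < Real.sqrt x := Real.sqrt_pos.2 hx
  have hsq := Real.hasDerivAt_sqrt hx.ne'
  have hEs : HasDerivAt (fun y => E (Real.sqrt y))
      (Real.exp (-x) * (1/(2*Real.sqrt x))) x := by
    have := (hasDerivAt_E (Real.sqrt x)).comp x hsq
    simpa [Real.sq_sqrt hx.le, Function.comp_def] using this
  have hexp := Real.hasDerivAt_exp x
  have h1 := hexp.mul hEs
  have h2 := ((hexp.sub_const 1).sub (((h1.sub hsq)).const_mul (2 / Real.sqrt π)))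
  refine h2.congr_deriv ?_
  have hπ : Real.sqrt π ≠ 0 := by positivity
  have hex : Real.exp x ≠ 0 := (Real.exp_pos x).ne'
  rw [Real.exp_neg]
  field_simp
  ring

lemma hasDerivAt_Vstar (x : ℝ) (hx : 0 < x) :
    HasDerivAt Vstar (Real.exp x * (1 - (2 / Real.sqrt π) * E (Real.sqrt x))) x := by
  refine (hasDerivAt_F x hx).congr_of_eventuallyEq ?_
  filter_upwards [isOpen_Ioi.mem_nhds hx] with y hy
  exact Vstar_eq y (le_of_lt hy)

lemma continuous_F : Continuous F := by
  refine (Real.continuous_exp.sub continuous_const).sub (continuous_const.mul ?_)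
  exact (Real.continuous_exp.mul (continuous_E.comp Real.continuous_sqrt)).sub
    Real.continuous_sqrt

lemma deriv_pos (x : ℝ) (hx : 0 < x) : 0 < deriv Vstar x := by
  rw [(hasDerivAt_Vstar x hx).deriv]
  have hπ : 0 < Real.sqrt π := Real.sqrt_pos.2 Real.pi_pos
  have h1 : (2 / Real.sqrt π) * E (Real.sqrt x) < (2 / Real.sqrt π) * (Real.sqrt π / 2) :=
    mul_lt_mul_of_pos_left (E_lt _) (by positivity)
  have h2 : (2 / Real.sqrt π) * (Real.sqrt π / 2) = 1 := by field_simp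
  have : (2 / Real.sqrt π) * E (Real.sqrt x) < 1 := by rw [← h2]; exact h1
  have := Real.exp_pos x
  nlinarith


end VP


/-- `V*_{1/2}` is strictly increasing on `[0, ∞)`, positive on `(0, ∞)` and
vanishes at `0`; hence `θ = -1 / V*_{1/2}(1/ε²)` is well defined for `ε > 0`. -/
theorem stmt_6 :
    StrictMonoOn Vstar (Set.Ici 0) ∧ (∀ ξ > (0 : ℝ), 0 < Vstar ξ) ∧ Vstar 0 = 0 ∧
      ∀ ε > (0 : ℝ), Vstar (1 / ε ^ 2) ≠ 0 := by
  have hcont : ContinuousOn Vstar (Set.Ici 0) :=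
    VP.continuous_F.continuousOn.congr fun y hy => VP.Vstar_eq y hy
  have hmono : StrictMonoOn Vstar (Set.Ici 0) := by
    refine strictMonoOn_of_deriv_pos (convex_Ici 0) hcont ?_
    intro x hx
    rw [interior_Ici] at hx
    exact VP.deriv_pos x hx
  have hpos : ∀ ξ > (0:ℝ), 0 < Vstar ξ := by
    intro ξ hξ
    have := hmono (Set.self_mem_Ici) (Set.mem_Ici.2 hξ.le) hξ
    rwa [VP.Vstar_zero] at this
  refine ⟨hmono, hpos, VP.Vstar_zero, fun ε hε => ?_⟩
  have : (0:ℝ) < 1 / ε ^ 2 := by positivity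
  exact (hpos _ this).ne'
end

section
/- As ξ → ∞, V*_{1/2}(ξ)/√ξ tends to 2/√π; that is, the function ξ ↦ V*_{1/2}(ξ)/√ξ converges to 2/√π along the filter atTop on (0, ∞). In particular V*_{1/2}(ξ) grows like ξ^{1/2} (and not exponentially) as ξ → ∞. -/
open Real MeasureTheory Set Filter

/-- The upper incomplete gamma integral `∫_x^∞ e^{-t} t^{s-1} dt`. -/
noncomputable def Jx (s x : ℝ) : ℝ := ∫ t in Set.Ioi x, Real.exp (-t) * t ^ (s - 1)

lemma Jx_integrableOn {s x : ℝ} (hs : 0 < s) (hx : 0 ≤ x) :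
    MeasureTheory.IntegrableOn (fun t : ℝ => Real.exp (-t) * t ^ (s - 1)) (Set.Ioi x) :=
  (Real.GammaIntegral_convergent hs).mono_set (Set.Ioi_subset_Ioi hx)

lemma Jx_rec {s x : ℝ} (hs : 0 < s) (hx : 0 < x) :
    Jx (s + 1) x = s * Jx s x + Real.exp (-x) * x ^ s := by
  have hint1 : MeasureTheory.IntegrableOn (fun t : ℝ => Real.exp (-t) * t ^ s) (Set.Ioi x) := by
    have := Jx_integrableOn (s := s + 1) (by linarith) hx.le
    simpa using this
  have hint2 := (Jx_integrableOn hs hx.le).const_mul s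
  have key : (∫ t in Set.Ioi x,
        (Real.exp (-t) * t ^ s - s * (Real.exp (-t) * t ^ (s - 1))))
      = 0 - -(Real.exp (-x) * x ^ s) := by
    apply MeasureTheory.integral_Ioi_of_hasDerivAt_of_tendsto'
      (f := fun t : ℝ => -(Real.exp (-t) * t ^ s))
    · intro t ht
      have htpos : 0 < t := lt_of_lt_of_le hx ht
      have h1 : HasDerivAt (fun t : ℝ => Real.exp (-t)) (-Real.exp (-t)) t := by
        simpa [Function.comp_def] using (Real.hasDerivAt_exp (-t)).comp t ((hasDerivAt_id t).neg)
      have h2 : HasDerivAt (fun t : ℝ => t ^ s) (s * t ^ (s - 1)) t :=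
        Real.hasDerivAt_rpow_const (Or.inl htpos.ne')
      have h3 := (h1.mul h2).neg
      convert h3 using 1
      · rfl
      ring
    · exact hint1.sub hint2
    · have h := (tendsto_rpow_mul_exp_neg_mul_atTop_nhds_zero s 1 one_pos).neg
      rw [neg_zero] at h
      apply h.congr
      intro t
      rw [neg_one_mul, mul_comm]
  rw [MeasureTheory.integral_sub hint1 hint2, MeasureTheory.integral_const_mul] at key
  have h1 : Jx (s + 1) x = ∫ t in Set.Ioi x, Real.exp (-t) * t ^ s := by
    unfold Jx
    norm_num
  rw [h1]
  unfold Jx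
  linarith [key]

lemma Gamma_three_half : Real.Gamma ((3:ℝ)/2) = Real.sqrt Real.pi / 2 := by
  have h : ((3:ℝ)/2) = 1/2 + 1 := by norm_num
  rw [h, Real.Gamma_add_one (by norm_num), Real.Gamma_one_half_eq]
  ring

lemma gamma_ge (k : ℕ) :
    Real.sqrt Real.pi / 2 * (Nat.factorial k : ℝ) ≤ Real.Gamma ((k : ℝ) + 3/2) := by
  induction k with
  | zero =>
    have h : ((0:ℕ):ℝ) + 3/2 = (3:ℝ)/2 := by norm_num
    rw [h, Gamma_three_half]
    simp
  | succ k ih =>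
    have hpos : (0:ℝ) < (k : ℝ) + 3/2 := by positivity
    have h1 : ((k + 1 : ℕ) : ℝ) + 3/2 = ((k : ℝ) + 3/2) + 1 := by push_cast; ring
    rw [h1, Real.Gamma_add_one hpos.ne']
    have hΓpos : 0 < Real.Gamma ((k : ℝ) + 3/2) := Real.Gamma_pos_of_pos hpos
    calc Real.sqrt Real.pi / 2 * ((k + 1).factorial : ℝ)
        = ((k : ℝ) + 1) * (Real.sqrt Real.pi / 2 * (k.factorial : ℝ)) := by
          push_cast [Nat.factorial_succ]; ring
      _ ≤ ((k : ℝ) + 1) * Real.Gamma ((k : ℝ) + 3/2) :=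
          mul_le_mul_of_nonneg_left ih (by positivity)
      _ ≤ ((k : ℝ) + 3/2) * Real.Gamma ((k : ℝ) + 3/2) := by nlinarith

lemma S_summable {x : ℝ} (hx : 0 < x) :
    Summable (fun k : ℕ => x ^ ((k : ℝ) + 1/2) / Real.Gamma ((k : ℝ) + 3/2)) := by
  have hπ : (0:ℝ) < Real.sqrt Real.pi := Real.sqrt_pos.mpr Real.pi_pos
  refine Summable.of_nonneg_of_le (fun k => by positivity) (fun k => ?_)
    ((Real.summable_pow_div_factorial x).mul_left (x ^ ((1:ℝ)/2) * (2 / Real.sqrt Real.pi)))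
  have hfac : (0:ℝ) < (k.factorial : ℝ) := by exact_mod_cast k.factorial_pos
  rw [Real.rpow_add hx, Real.rpow_natCast]
  calc x ^ k * x ^ ((1:ℝ)/2) / Real.Gamma ((k : ℝ) + 3/2)
      ≤ x ^ k * x ^ ((1:ℝ)/2) / (Real.sqrt Real.pi / 2 * (k.factorial : ℝ)) := by
        gcongr
        exact gamma_ge k
    _ = x ^ ((1:ℝ)/2) * (2 / Real.sqrt Real.pi) * (x ^ k / (k.factorial : ℝ)) := by
        field_simp

lemma tele {x : ℝ} (hx : 0 < x) (n : ℕ) :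
    Jx ((n : ℝ) + 1/2) x / Real.Gamma ((n : ℝ) + 1/2)
      = Jx (1/2) x / Real.sqrt Real.pi
        + Real.exp (-x) * ∑ k ∈ Finset.range n, x ^ ((k : ℝ) + 1/2) / Real.Gamma ((k : ℝ) + 3/2) := by
  induction n with
  | zero =>
    have hg : Real.Gamma ((2:ℝ)⁻¹) = Real.sqrt Real.pi := by
      rw [← one_div]; exact Real.Gamma_one_half_eq
    simp [hg]
  | succ n ih =>
    have hs : (0:ℝ) < (n : ℝ) + 1/2 := by positivity
    have hΓpos : 0 < Real.Gamma ((n : ℝ) + 1/2) := Real.Gamma_pos_of_pos hs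
    have hπ : (0:ℝ) < Real.sqrt Real.pi := Real.sqrt_pos.mpr Real.pi_pos
    have hcast : ((n + 1 : ℕ) : ℝ) + 1/2 = ((n : ℝ) + 1/2) + 1 := by push_cast; ring
    have hΓ : Real.Gamma (((n : ℝ) + 1/2) + 1) = ((n : ℝ) + 1/2) * Real.Gamma ((n : ℝ) + 1/2) :=
      Real.Gamma_add_one hs.ne'
    have hΓ32 : Real.Gamma ((n : ℝ) + 3/2) = ((n : ℝ) + 1/2) * Real.Gamma ((n : ℝ) + 1/2) := by
      rw [show (n : ℝ) + 3/2 = ((n : ℝ) + 1/2) + 1 by ring, hΓ]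
    rw [hcast, Jx_rec hs hx, hΓ, Finset.sum_range_succ, hΓ32]
    have hJval : Jx ((n : ℝ) + 1/2) x
        = (Jx (1/2) x / Real.sqrt Real.pi
            + Real.exp (-x) * ∑ k ∈ Finset.range n, x ^ ((k : ℝ) + 1/2) / Real.Gamma ((k : ℝ) + 3/2))
          * Real.Gamma ((n : ℝ) + 1/2) := by
      rw [← ih, div_mul_cancel₀ _ hΓpos.ne']
    rw [hJval]
    field_simp
    ring

lemma gamma_split {s x : ℝ} (hs : 0 < s) (hx : 0 < x) :
    Real.Gamma s = (∫ t in Set.Ioc 0 x, Real.exp (-t) * t ^ (s - 1)) + Jx s x := by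
  rw [Real.Gamma_eq_integral hs, ← Set.Ioc_union_Ioi_eq_Ioi hx.le,
    MeasureTheory.setIntegral_union (Set.Ioc_disjoint_Ioi le_rfl) measurableSet_Ioi
      ((Real.GammaIntegral_convergent hs).mono_set Set.Ioc_subset_Ioi_self)
      (Jx_integrableOn hs hx.le)]
  rfl

lemma Ioc_nonneg {s x : ℝ} :
    0 ≤ ∫ t in Set.Ioc 0 x, Real.exp (-t) * t ^ (s - 1) :=
  MeasureTheory.setIntegral_nonneg measurableSet_Ioc fun t ht =>
    mul_nonneg (Real.exp_pos _).le (Real.rpow_nonneg ht.1.le _)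

lemma Ioc_bound {s x : ℝ} (hs : 1 ≤ s) (hx : 0 < x) :
    (∫ t in Set.Ioc 0 x, Real.exp (-t) * t ^ (s - 1)) ≤ x * x ^ (s - 1) := by
  have h1 : (∫ t in Set.Ioc 0 x, Real.exp (-t) * t ^ (s - 1))
      ≤ ∫ _ in Set.Ioc 0 x, x ^ (s - 1) := by
    apply MeasureTheory.setIntegral_mono_on
    · exact (Real.GammaIntegral_convergent (by linarith)).mono_set Set.Ioc_subset_Ioi_self
    · exact MeasureTheory.integrableOn_const measure_Ioc_lt_top.ne
    · exact measurableSet_Ioc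
    · intro t ht
      calc Real.exp (-t) * t ^ (s - 1) ≤ 1 * t ^ (s - 1) := by
            apply mul_le_mul_of_nonneg_right _ (Real.rpow_nonneg ht.1.le _)
            rw [show (1:ℝ) = Real.exp 0 from (Real.exp_zero).symm]
            exact Real.exp_le_exp.mpr (by linarith [ht.1])
        _ = t ^ (s - 1) := one_mul _
        _ ≤ x ^ (s - 1) := Real.rpow_le_rpow ht.1.le ht.2 (by linarith)
  refine h1.trans_eq ?_
  rw [MeasureTheory.setIntegral_const, Real.volume_real_Ioc, smul_eq_mul,
    max_eq_left (by linarith : (0:ℝ) ≤ x - 0)]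
  norm_num

lemma ratio_tendsto {x : ℝ} (hx : 0 < x) :
    Filter.Tendsto (fun n : ℕ => Jx ((n : ℝ) + 1/2) x / Real.Gamma ((n : ℝ) + 1/2))
      Filter.atTop (nhds 1) := by
  have hπ : (0:ℝ) < Real.sqrt Real.pi := Real.sqrt_pos.mpr Real.pi_pos
  rw [← Filter.tendsto_add_atTop_iff_nat 1]
  have hb : Filter.Tendsto
      (fun n : ℕ => x * x ^ ((1:ℝ)/2) * (2 / Real.sqrt Real.pi) * (x ^ n / (n.factorial : ℝ)))
      Filter.atTop (nhds 0) := by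
    have h0 := (Real.summable_pow_div_factorial x).tendsto_atTop_zero
    have := h0.const_mul (x * x ^ ((1:ℝ)/2) * (2 / Real.sqrt Real.pi))
    simpa using this
  have hlow : Filter.Tendsto
      (fun n : ℕ => 1 - x * x ^ ((1:ℝ)/2) * (2 / Real.sqrt Real.pi) * (x ^ n / (n.factorial : ℝ)))
      Filter.atTop (nhds 1) := by
    have := hb.const_sub (1:ℝ)
    simpa using this
  apply tendsto_of_tendsto_of_tendsto_of_le_of_le hlow tendsto_const_nhds
  · -- lower bound
    intro n
    dsimp only
    have hcast : ((n + 1 : ℕ) : ℝ) + 1/2 = (n : ℝ) + 3/2 := by push_cast; ring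
    have hs : (0:ℝ) < (n : ℝ) + 3/2 := by positivity
    have hΓpos : 0 < Real.Gamma ((n : ℝ) + 3/2) := Real.Gamma_pos_of_pos hs
    have hfac : (0:ℝ) < (n.factorial : ℝ) := by exact_mod_cast n.factorial_pos
    have hsplit := gamma_split hs hx
    set C := ∫ t in Set.Ioc 0 x, Real.exp (-t) * t ^ (((n : ℝ) + 3/2) - 1) with hC
    have hC0 : 0 ≤ C := Ioc_nonneg
    have hCle : C ≤ x * x ^ (((n : ℝ) + 3/2) - 1) := Ioc_bound (by linarith) hx
    have hexp : x ^ (((n : ℝ) + 3/2) - 1) = x ^ n * x ^ ((1:ℝ)/2) := by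
      rw [show ((n : ℝ) + 3/2) - 1 = (n : ℝ) + 1/2 by ring, Real.rpow_add hx,
        Real.rpow_natCast]
    have hquot : C / Real.Gamma ((n : ℝ) + 3/2)
        ≤ x * x ^ ((1:ℝ)/2) * (2 / Real.sqrt Real.pi) * (x ^ n / (n.factorial : ℝ)) := by
      have hd : (0:ℝ) < Real.sqrt Real.pi / 2 * (n.factorial : ℝ) := by positivity
      calc C / Real.Gamma ((n : ℝ) + 3/2)
          ≤ (x * (x ^ n * x ^ ((1:ℝ)/2))) / (Real.sqrt Real.pi / 2 * (n.factorial : ℝ)) := by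
            apply div_le_div₀ (by positivity) _ hd (gamma_ge n)
            rw [← hexp]; exact hCle
        _ = x * x ^ ((1:ℝ)/2) * (2 / Real.sqrt Real.pi) * (x ^ n / (n.factorial : ℝ)) := by
            field_simp
    rw [hcast]
    have hJ : Jx ((n : ℝ) + 3/2) x = Real.Gamma ((n : ℝ) + 3/2) - C := by linarith
    rw [hJ, sub_div, div_self hΓpos.ne']
    linarith
  · -- upper bound
    intro n
    dsimp only
    have hcast : ((n + 1 : ℕ) : ℝ) + 1/2 = (n : ℝ) + 3/2 := by push_cast; ring
    have hs : (0:ℝ) < (n : ℝ) + 3/2 := by positivity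
    have hΓpos : 0 < Real.Gamma ((n : ℝ) + 3/2) := Real.Gamma_pos_of_pos hs
    have hsplit := gamma_split hs hx
    have hC0 : 0 ≤ ∫ t in Set.Ioc 0 x, Real.exp (-t) * t ^ (((n : ℝ) + 3/2) - 1) :=
      Ioc_nonneg
    rw [hcast, div_le_one hΓpos]
    linarith

lemma S_eq {x : ℝ} (hx : 0 < x) :
    ∑' k : ℕ, x ^ ((k : ℝ) + 1/2) / Real.Gamma ((k : ℝ) + 3/2)
      = Real.exp x * (1 - Jx (1/2) x / Real.sqrt Real.pi) := by
  have hsum := S_summable hx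
  have h1 := hsum.hasSum.tendsto_sum_nat
  have h2 := h1.const_mul (Real.exp (-x))
  have h3 : Filter.Tendsto
      (fun n : ℕ => Jx ((n : ℝ) + 1/2) x / Real.Gamma ((n : ℝ) + 1/2)
        - Jx (1/2) x / Real.sqrt Real.pi)
      Filter.atTop (nhds (1 - Jx (1/2) x / Real.sqrt Real.pi)) :=
    (ratio_tendsto hx).sub_const _
  have heq : (fun n : ℕ => Real.exp (-x) *
        ∑ k ∈ Finset.range n, x ^ ((k : ℝ) + 1/2) / Real.Gamma ((k : ℝ) + 3/2))
      = fun n : ℕ => Jx ((n : ℝ) + 1/2) x / Real.Gamma ((n : ℝ) + 1/2)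
        - Jx (1/2) x / Real.sqrt Real.pi := by
    funext n
    rw [tele hx n]
    ring
  rw [heq] at h2
  have hmain := tendsto_nhds_unique h2 h3
  rw [← hmain, ← mul_assoc, ← Real.exp_add]
  simp

lemma J_nonneg {x : ℝ} (hx : 0 < x) : 0 ≤ Jx (1/2) x :=
  MeasureTheory.setIntegral_nonneg measurableSet_Ioi fun t ht =>
    mul_nonneg (Real.exp_pos _).le (Real.rpow_nonneg (le_of_lt (lt_trans hx ht)) _)

lemma J_le {x : ℝ} (hx : 0 < x) : Jx (1/2) x ≤ x ^ (-(1/2) : ℝ) * Real.exp (-x) := by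
  have hexpint : MeasureTheory.IntegrableOn (fun t : ℝ => Real.exp (-t)) (Set.Ioi x) := by
    have := exp_neg_integrableOn_Ioi x (b := 1) one_pos
    simpa using this
  have h1 : Jx (1/2) x ≤ ∫ t in Set.Ioi x, x ^ (-(1/2) : ℝ) * Real.exp (-t) := by
    apply MeasureTheory.setIntegral_mono_on (Jx_integrableOn one_half_pos hx.le)
      (hexpint.const_mul _) measurableSet_Ioi
    intro t ht
    rw [mul_comm]
    apply mul_le_mul_of_nonneg_right _ (Real.exp_pos _).le
    rw [show (1/2 : ℝ) - 1 = -(1/2) by norm_num]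
    exact Real.rpow_le_rpow_of_nonpos hx (le_of_lt ht) (by norm_num)
  rwa [MeasureTheory.integral_const_mul, integral_exp_neg_Ioi] at h1

lemma exp_shift (x : ℝ) :
    ∑' k : ℕ, x ^ (k + 1) / (Nat.factorial (k + 1) : ℝ) = Real.exp x - 1 := by
  have h : Real.exp x = ∑' n : ℕ, x ^ n / (n.factorial : ℝ) := by
    rw [Real.exp_eq_exp_ℝ, NormedSpace.exp_eq_tsum_div]
  rw [Summable.tsum_eq_zero_add (Real.summable_pow_div_factorial x)] at h
  simp only [pow_zero, Nat.factorial_zero, Nat.cast_one, div_one] at h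
  linarith [h]

lemma S_shift {x : ℝ} (hx : 0 < x) :
    ∑' k : ℕ, x ^ (((k : ℝ) + 1) + 1/2) / Real.Gamma (((k : ℝ) + 1) + 3/2)
      = (∑' k : ℕ, x ^ ((k : ℝ) + 1/2) / Real.Gamma ((k : ℝ) + 3/2))
        - 2 * Real.sqrt x / Real.sqrt Real.pi := by
  have hπ : (0:ℝ) < Real.sqrt Real.pi := Real.sqrt_pos.mpr Real.pi_pos
  have h := Summable.tsum_eq_zero_add (S_summable hx)
  have hcongr : ∑' k : ℕ, x ^ (((k + 1 : ℕ) : ℝ) + 1/2) / Real.Gamma (((k + 1 : ℕ) : ℝ) + 3/2)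
      = ∑' k : ℕ, x ^ (((k : ℝ) + 1) + 1/2) / Real.Gamma (((k : ℝ) + 1) + 3/2) := by
    apply tsum_congr
    intro k
    push_cast
    ring_nf
  rw [hcongr] at h
  have h0 : x ^ (((0 : ℕ) : ℝ) + 1/2) / Real.Gamma (((0 : ℕ) : ℝ) + 3/2)
      = 2 * Real.sqrt x / Real.sqrt Real.pi := by
    rw [show ((0 : ℕ) : ℝ) + 1/2 = 1 / (2:ℝ) by norm_num,
      show ((0 : ℕ) : ℝ) + 3/2 = (3:ℝ)/2 by norm_num, Gamma_three_half,
      ← Real.sqrt_eq_rpow]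
    field_simp
  rw [h0] at h
  linarith [h]


/-- `V*_{1/2}(ξ)/√ξ → 2/√π` as `ξ → ∞`: algebraic growth like `ξ^{1/2}`. -/
theorem stmt_7 :
    Filter.Tendsto (fun ξ : ℝ => Vstar ξ / Real.sqrt ξ) Filter.atTop
      (nhds (2 / Real.sqrt Real.pi)) := by
  have hπ : (0:ℝ) < Real.sqrt Real.pi := Real.sqrt_pos.mpr Real.pi_pos
  have hπ1 : (1:ℝ) ≤ Real.sqrt Real.pi := by
    rw [show (1:ℝ) = Real.sqrt 1 from (Real.sqrt_one).symm]
    exact Real.sqrt_le_sqrt (by linarith [Real.pi_gt_three])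
  have key : ∀ x : ℝ, 1 ≤ x → Vstar x / Real.sqrt x
      = 2 / Real.sqrt Real.pi
        + (Real.exp x * Jx (1/2) x / Real.sqrt Real.pi - 1) / Real.sqrt x := by
    intro x hx1
    have hx : (0:ℝ) < x := lt_of_lt_of_le one_pos hx1
    have hsx : 0 < Real.sqrt x := Real.sqrt_pos.mpr hx
    unfold Vstar
    rw [exp_shift, S_shift hx, S_eq hx]
    field_simp
    ring
  have hN : ∀ x : ℝ, 1 ≤ x →
      -1 ≤ Real.exp x * Jx (1/2) x / Real.sqrt Real.pi - 1
        ∧ Real.exp x * Jx (1/2) x / Real.sqrt Real.pi - 1 ≤ 1 := by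
    intro x hx1
    have hx : (0:ℝ) < x := lt_of_lt_of_le one_pos hx1
    have hJ0 := J_nonneg hx
    have hJle := J_le hx
    constructor
    · have h : 0 ≤ Real.exp x * Jx (1/2) x / Real.sqrt Real.pi := by positivity
      linarith
    · have h1 : Real.exp x * Jx (1/2) x ≤ Real.exp x * (x ^ (-(1/2) : ℝ) * Real.exp (-x)) :=
        mul_le_mul_of_nonneg_left hJle (Real.exp_pos _).le
      have h2 : Real.exp x * (x ^ (-(1/2) : ℝ) * Real.exp (-x)) = x ^ (-(1/2) : ℝ) := by
        rw [Real.exp_neg]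
        field_simp
      have h3 : x ^ (-(1/2) : ℝ) ≤ 1 :=
        Real.rpow_le_one_of_one_le_of_nonpos hx1 (by norm_num)
      have h4 : Real.exp x * Jx (1/2) x / Real.sqrt Real.pi ≤ 1 / Real.sqrt Real.pi := by
        apply div_le_div₀ (by norm_num) _ hπ le_rfl
        linarith
      have h5 : 1 / Real.sqrt Real.pi ≤ 1 := by
        rw [div_le_one hπ]; exact hπ1
      linarith
  have hsqrt : Filter.Tendsto Real.sqrt Filter.atTop Filter.atTop := by
    have h := tendsto_rpow_atTop (y := (1:ℝ)/2) (by norm_num)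
    apply h.congr
    intro t
    rw [Real.sqrt_eq_rpow]
  have hinv : Filter.Tendsto (fun x : ℝ => 1 / Real.sqrt x) Filter.atTop (nhds 0) := by
    simp only [one_div]
    exact hsqrt.inv_tendsto_atTop
  have hlow : Filter.Tendsto (fun x : ℝ => -(1 / Real.sqrt x)) Filter.atTop (nhds 0) := by
    have := hinv.neg
    simpa using this
  have hb : Filter.Tendsto
      (fun x : ℝ => (Real.exp x * Jx (1/2) x / Real.sqrt Real.pi - 1) / Real.sqrt x)
      Filter.atTop (nhds 0) := by
    apply tendsto_of_tendsto_of_tendsto_of_le_of_le' hlow hinv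
    · filter_upwards [Filter.eventually_ge_atTop (1:ℝ)] with x hx1
      have hsx : 0 < Real.sqrt x := Real.sqrt_pos.mpr (lt_of_lt_of_le one_pos hx1)
      rw [← neg_div]
      exact (div_le_div_iff_of_pos_right hsx).mpr (hN x hx1).1
    · filter_upwards [Filter.eventually_ge_atTop (1:ℝ)] with x hx1
      have hsx : 0 < Real.sqrt x := Real.sqrt_pos.mpr (lt_of_lt_of_le one_pos hx1)
      exact (div_le_div_iff_of_pos_right hsx).mpr (hN x hx1).2
  have hfinal := hb.const_add (2 / Real.sqrt Real.pi)
  rw [add_zero] at hfinal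
  apply hfinal.congr'
  filter_upwards [Filter.eventually_ge_atTop (1:ℝ)] with x hx1
  exact (key x hx1).symm
end

section
/- As ε → 0⁺, the quantity ε·V*_{1/2}(1/ε²) tends to 2/√π. In particular V*_{1/2}(1/ε²) = O(1/ε) as ε → 0⁺, and hence θ = −1/V*_{1/2}(1/ε²) satisfies θ = O(ε). -/
open Real MeasureTheory Set Filter Finset in
lemma myGammaProd (k : ℕ) :
    Real.Gamma ((k : ℝ) + 3/2) =
      (∏ j ∈ Finset.range (k+1), ((j : ℝ) + 1/2)) * Real.sqrt Real.pi := by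
  induction k with
  | zero =>
      simp only [Nat.cast_zero, zero_add, Finset.prod_range_one]
      rw [show (3:ℝ)/2 = 1/2 + 1 by norm_num, Real.Gamma_add_one (by norm_num),
        Real.Gamma_one_half_eq]
  | succ k ih =>
      have h1 : ((k+1 : ℕ) : ℝ) + 3/2 = ((k:ℝ) + 3/2) + 1 := by push_cast; ring
      rw [h1, Real.Gamma_add_one (by positivity), ih]
      conv_rhs => rw [Finset.prod_range_succ]
      push_cast
      ring

lemma myProdGe (k : ℕ) :
    (k.factorial : ℝ) / 2 ≤ ∏ j ∈ Finset.range (k+1), ((j : ℝ) + 1/2) := by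
  induction k with
  | zero => norm_num
  | succ k ih =>
      have h0 : (0:ℝ) ≤ (k.factorial : ℝ) / 2 := by positivity
      have hP : (0:ℝ) ≤ ∏ j ∈ Finset.range (k+1), ((j : ℝ) + 1/2) := le_trans h0 ih
      rw [Finset.prod_range_succ]
      have h1 : ((k+1 : ℕ).factorial : ℝ) / 2 = ((k.factorial : ℝ)/2) * ((k:ℝ)+1) := by
        rw [Nat.factorial_succ]; push_cast; ring
      rw [h1]
      calc ((k.factorial : ℝ)/2) * ((k:ℝ)+1)
          ≤ (∏ j ∈ Finset.range (k+1), ((j : ℝ) + 1/2)) * ((k:ℝ)+1) := by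
            apply mul_le_mul_of_nonneg_right ih (by positivity)
        _ ≤ (∏ j ∈ Finset.range (k+1), ((j : ℝ) + 1/2)) * (((k+1:ℕ):ℝ)+1/2) := by
            apply mul_le_mul_of_nonneg_left _ hP
            push_cast; linarith

lemma myGammaGe (k : ℕ) : (k.factorial : ℝ) / 2 ≤ Real.Gamma ((k : ℝ) + 3/2) := by
  rw [myGammaProd k]
  have h1 : (1:ℝ) ≤ Real.sqrt Real.pi := by
    rw [show (1:ℝ) = Real.sqrt 1 by rw [Real.sqrt_one]]
    exact Real.sqrt_le_sqrt (by linarith [Real.pi_gt_three])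
  calc (k.factorial : ℝ) / 2 ≤ ∏ j ∈ Finset.range (k+1), ((j : ℝ) + 1/2) := myProdGe k
    _ = (∏ j ∈ Finset.range (k+1), ((j : ℝ) + 1/2)) * 1 := by ring
    _ ≤ (∏ j ∈ Finset.range (k+1), ((j : ℝ) + 1/2)) * Real.sqrt Real.pi := by
        apply mul_le_mul_of_nonneg_left h1
        exact le_trans (by positivity) (myProdGe k)

open Complex in
lemma myBetaHalf (k : ℕ) :
    (∫ t in (0:ℝ)..1, t ^ (-(1/2) : ℝ) * (1-t)^k)
      = (k.factorial : ℝ) / ∏ j ∈ Finset.range (k+1), ((j:ℝ) + 1/2) := by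
  have hu : 0 < (1/2 : ℂ).re := by norm_num
  have hb := Complex.betaIntegral_eval_nat_add_one_right hu k
  have hcast : ((∫ t in (0:ℝ)..1, t ^ (-(1/2):ℝ) * (1-t)^k : ℝ) : ℂ)
      = Complex.betaIntegral (1/2) ((k:ℂ)+1) := by
    rw [← intervalIntegral.integral_ofReal]
    unfold Complex.betaIntegral
    refine intervalIntegral.integral_congr fun x hx => ?_
    rw [Set.uIcc_of_le (by norm_num : (0:ℝ) ≤ 1)] at hx
    push_cast
    rw [show ((1:ℂ)/2 - 1) = ((-(1/2):ℝ):ℂ) by push_cast; norm_num,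
      ← Complex.ofReal_cpow hx.1,
      show ((k:ℂ) + 1 - 1) = ((k:ℕ):ℂ) by push_cast; ring,
      Complex.cpow_natCast]
  refine Complex.ofReal_inj.mp ?_
  rw [hcast, hb]
  push_cast
  congr 1
  exact Finset.prod_congr rfl fun j _ => by ring

noncomputable def T0 (ξ : ℝ) : ℝ := ∑' k : ℕ, ξ ^ ((k:ℝ) + 1/2) / Real.Gamma ((k:ℝ) + 3/2)

lemma myRpowSplit {ξ : ℝ} (hξ : 0 < ξ) (k : ℕ) :
    ξ ^ ((k:ℝ) + 1/2) = ξ ^ k * ξ ^ ((1:ℝ)/2) := by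
  rw [Real.rpow_add hξ, Real.rpow_natCast]

lemma myTermNonneg {ξ : ℝ} (hξ : 0 < ξ) (k : ℕ) :
    0 ≤ ξ ^ ((k:ℝ) + 1/2) / Real.Gamma ((k:ℝ) + 3/2) := by
  apply div_nonneg (Real.rpow_nonneg hξ.le _)
  exact (Real.Gamma_pos_of_pos (by positivity)).le

lemma myT0Summable {ξ : ℝ} (hξ : 0 < ξ) :
    Summable (fun k : ℕ => ξ ^ ((k:ℝ) + 1/2) / Real.Gamma ((k:ℝ) + 3/2)) := by
  refine Summable.of_nonneg_of_le (myTermNonneg hξ) (fun k => ?_)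
    ((Real.summable_pow_div_factorial ξ).mul_left (ξ ^ ((1:ℝ)/2) * 2))
  have hG : (0:ℝ) < (k.factorial : ℝ)/2 := by positivity
  have hGk := myGammaGe k
  rw [myRpowSplit hξ k]
  have hnum : (0:ℝ) ≤ ξ ^ k * ξ ^ ((1:ℝ)/2) := by positivity
  calc ξ ^ k * ξ ^ ((1:ℝ)/2) / Real.Gamma ((k:ℝ) + 3/2)
      ≤ ξ ^ k * ξ ^ ((1:ℝ)/2) / ((k.factorial : ℝ)/2) :=
        div_le_div_of_nonneg_left hnum hG hGk
    _ = ξ ^ ((1:ℝ)/2) * 2 * (ξ^k / (k.factorial : ℝ)) := by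
        have h : (k.factorial : ℝ) ≠ 0 := by positivity
        field_simp

lemma myExpSeries (x : ℝ) : ∑' n : ℕ, x^n / (n.factorial : ℝ) = Real.exp x := by
  rw [Real.exp_eq_exp_ℝ, NormedSpace.exp_eq_tsum_div]

open MeasureTheory Set in
lemma myIntOn (k : ℕ) :
    IntegrableOn (fun t : ℝ => t ^ (-(1/2):ℝ) * (1-t)^k) (Ioc (0:ℝ) 1) := by
  have hc : ContinuousOn (fun t : ℝ => (1-t)^k) (Set.uIcc (0:ℝ) 1) :=
    Continuous.continuousOn (by continuity)
  have h := (intervalIntegral.intervalIntegrable_rpow' (a := 0) (b := 1)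
      (show (-1:ℝ) < -(1/2) by norm_num)).mul_continuousOn hc
  rwa [intervalIntegrable_iff_integrableOn_Ioc_of_le
    (by norm_num : (0:ℝ) ≤ 1)] at h

open MeasureTheory Set in
lemma myIntOnExp {ξ : ℝ} :
    IntegrableOn (fun t : ℝ => t ^ (-(1/2):ℝ) * Real.exp (ξ*(1-t))) (Ioc (0:ℝ) 1) := by
  have hc : ContinuousOn (fun t : ℝ => Real.exp (ξ*(1-t))) (Set.uIcc (0:ℝ) 1) :=
    Continuous.continuousOn (by continuity)
  have h := (intervalIntegral.intervalIntegrable_rpow' (a := 0) (b := 1)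
      (show (-1:ℝ) < -(1/2) by norm_num)).mul_continuousOn hc
  rwa [intervalIntegrable_iff_integrableOn_Ioc_of_le
    (by norm_num : (0:ℝ) ≤ 1)] at h

open MeasureTheory Set Real in
lemma myKeySwap {ξ : ℝ} (hξ : 0 < ξ) :
    T0 ξ = ξ ^ ((1:ℝ)/2) / Real.sqrt Real.pi
        * ∫ t in Ioc (0:ℝ) 1, t ^ (-(1/2):ℝ) * Real.exp (ξ*(1-t)) := by
  classical
  set c : ℝ := ξ ^ ((1:ℝ)/2) / Real.sqrt Real.pi with hc
  have hcpos : 0 < c := by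
    apply div_pos (Real.rpow_pos_of_pos hξ _) (Real.sqrt_pos.mpr Real.pi_pos)
  set f : ℕ → ℝ → ℝ := fun k t => (c * (ξ^k / (k.factorial : ℝ))) * (t ^ (-(1/2):ℝ) * (1-t)^k)
    with hf
  have hint : ∀ k, IntegrableOn (f k) (Ioc (0:ℝ) 1) := fun k => (myIntOn k).const_mul _
  have hval : ∀ k, ∫ t in Ioc (0:ℝ) 1, f k t
      = ξ ^ ((k:ℝ) + 1/2) / Real.Gamma ((k:ℝ) + 3/2) := by
    intro k
    simp only [hf]
    rw [MeasureTheory.integral_const_mul]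
    have hIoc : ∫ t in Ioc (0:ℝ) 1, t ^ (-(1/2):ℝ) * (1-t)^k
        = ∫ t in (0:ℝ)..1, t ^ (-(1/2):ℝ) * (1-t)^k := by
      rw [intervalIntegral.integral_of_le (by norm_num : (0:ℝ) ≤ 1)]
    rw [hIoc, myBetaHalf k, myGammaProd k, myRpowSplit hξ k, hc]
    have hP : (0:ℝ) < ∏ j ∈ Finset.range (k+1), ((j : ℝ) + 1/2) := by
      apply Finset.prod_pos; intro j _; positivity
    have hsπ : (0:ℝ) < Real.sqrt Real.pi := Real.sqrt_pos.mpr Real.pi_pos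
    have hkf : (0:ℝ) < (k.factorial : ℝ) := by positivity
    field_simp
  have hnn : ∀ k, ∀ t ∈ Ioc (0:ℝ) 1, 0 ≤ f k t := by
    intro k t ht
    apply mul_nonneg (by positivity)
    apply mul_nonneg (Real.rpow_nonneg ht.1.le _)
    exact pow_nonneg (by linarith [ht.2]) k
  have hsum : Summable (fun k : ℕ => ξ ^ ((k:ℝ) + 1/2) / Real.Gamma ((k:ℝ) + 3/2)) :=
    myT0Summable hξ
  have hswap : ∫ t in Ioc (0:ℝ) 1, ∑' k, f k t = ∑' k, ∫ t in Ioc (0:ℝ) 1, f k t := by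
    apply MeasureTheory.integral_tsum
    · exact fun k => (hint k).aestronglyMeasurable
    · have heach : ∀ k : ℕ, ∫⁻ t, ‖f k t‖ₑ ∂(volume.restrict (Ioc (0:ℝ) 1))
          = ENNReal.ofReal (ξ ^ ((k:ℝ) + 1/2) / Real.Gamma ((k:ℝ) + 3/2)) := by
        intro k
        rw [← MeasureTheory.ofReal_integral_norm_eq_lintegral_enorm (hint k)]
        congr 1
        rw [← hval k]
        apply MeasureTheory.setIntegral_congr_fun measurableSet_Ioc
        intro t ht
        exact Real.norm_of_nonneg (hnn k t ht)
      rw [tsum_congr heach, ← ENNReal.ofReal_tsum_of_nonneg (myTermNonneg hξ) hsum]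
      exact ENNReal.ofReal_ne_top
  have hpt : ∀ t ∈ Ioc (0:ℝ) 1,
      ∑' k, f k t = c * (t ^ (-(1/2):ℝ) * Real.exp (ξ*(1-t))) := by
    intro t ht
    have h1 : ∀ k : ℕ, f k t = (c * t ^ (-(1/2):ℝ)) * ((ξ*(1-t))^k / (k.factorial : ℝ)) := by
      intro k
      simp only [hf, mul_pow]
      ring
    rw [tsum_congr h1, tsum_mul_left, myExpSeries (ξ*(1-t))]
    ring
  have hI : ∫ t in Ioc (0:ℝ) 1, ∑' k, f k t
      = c * ∫ t in Ioc (0:ℝ) 1, t ^ (-(1/2):ℝ) * Real.exp (ξ*(1-t)) := by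
    rw [← MeasureTheory.integral_const_mul]
    apply MeasureTheory.setIntegral_congr_fun measurableSet_Ioc
    intro t ht
    exact hpt t ht
  have hT0 : T0 ξ = ∑' k : ℕ, ξ ^ ((k:ℝ) + 1/2) / Real.Gamma ((k:ℝ) + 3/2) := rfl
  rw [hT0, ← tsum_congr hval, ← hswap, hI]

open MeasureTheory Set Real in
lemma myFullLine {ξ : ℝ} (hξ : 0 < ξ) :
    ∫ t in Ioi (0:ℝ), t ^ (-(1/2):ℝ) * Real.exp (ξ*(1-t))
      = Real.exp ξ * ((1/ξ) ^ ((1:ℝ)/2) * Real.Gamma (1/2)) := by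
  have hcong : ∀ t ∈ Ioi (0:ℝ),
      t ^ (-(1/2):ℝ) * Real.exp (ξ*(1-t))
        = Real.exp ξ * (t ^ ((1:ℝ)/2 - 1) * Real.exp (-(ξ*t))) := by
    intro t _
    rw [show ((1:ℝ)/2 - 1) = -(1/2) by norm_num, show ξ*(1-t) = ξ + -(ξ*t) by ring,
      Real.exp_add]
    ring
  rw [MeasureTheory.setIntegral_congr_fun measurableSet_Ioi hcong,
    MeasureTheory.integral_const_mul, Real.integral_rpow_mul_exp_neg_mul_Ioi (by norm_num) hξ]

open MeasureTheory Set Real in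
lemma myTailIntegrable {ξ : ℝ} (hξ : 0 < ξ) :
    IntegrableOn (fun t : ℝ => t ^ (-(1/2):ℝ) * Real.exp (ξ*(1-t))) (Ioi (1:ℝ)) := by
  have hdom : IntegrableOn (fun t : ℝ => Real.exp ξ * Real.exp (-ξ*t)) (Ioi (1:ℝ)) :=
    (exp_neg_integrableOn_Ioi 1 hξ).const_mul _
  apply hdom.mono'
  · apply AEStronglyMeasurable.mul
    · apply (ContinuousOn.aestronglyMeasurable _ measurableSet_Ioi)
      intro t ht
      exact (Real.continuousAt_rpow_const t _
        (Or.inl (ne_of_gt (lt_trans zero_lt_one (mem_Ioi.mp ht))))).continuousWithinAt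
    · exact (Real.continuous_exp.comp
        (continuous_const.mul (continuous_const.sub continuous_id))).aestronglyMeasurable
  · rw [MeasureTheory.ae_restrict_iff' measurableSet_Ioi]
    apply MeasureTheory.ae_of_all
    intro t ht
    have ht1 : (1:ℝ) ≤ t := le_of_lt ht
    have h1 : t ^ (-(1/2):ℝ) ≤ 1 :=
      Real.rpow_le_one_of_one_le_of_nonpos ht1 (by norm_num)
    have h2 : 0 ≤ t ^ (-(1/2):ℝ) := Real.rpow_nonneg (by linarith) _
    have h3 : Real.exp (ξ*(1-t)) = Real.exp ξ * Real.exp (-ξ*t) := by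
      rw [← Real.exp_add]; ring_nf
    rw [Real.norm_of_nonneg (mul_nonneg h2 (Real.exp_pos _).le), h3]
    calc t ^ (-(1/2):ℝ) * (Real.exp ξ * Real.exp (-ξ*t))
        ≤ 1 * (Real.exp ξ * Real.exp (-ξ*t)) := by
          apply mul_le_mul_of_nonneg_right h1 (by positivity)
      _ = Real.exp ξ * Real.exp (-ξ*t) := by ring

open MeasureTheory Set Real in
lemma myExpTail {ξ : ℝ} (hξ : 0 < ξ) :
    ∫ t in Ioi (1:ℝ), Real.exp (-ξ*t) = Real.exp (-ξ) / ξ := by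
  have hderiv : ∀ t ∈ Ici (1:ℝ),
      HasDerivAt (fun t : ℝ => -Real.exp (-ξ*t) / ξ) (Real.exp (-ξ*t)) t := by
    intro t _
    have h1 : HasDerivAt (fun t : ℝ => -ξ*t) (-ξ) t := by
      simpa using (hasDerivAt_id t).const_mul (-ξ)
    have h3 : HasDerivAt (fun t : ℝ => -Real.exp (-ξ*t) / ξ) (-(Real.exp (-ξ*t) * -ξ) / ξ) t :=
      ((h1.exp).neg).div_const ξ
    convert h3 using 1
    field_simp [hξ.ne']
  have hlim : Filter.Tendsto (fun t : ℝ => -Real.exp (-ξ*t) / ξ) Filter.atTop (nhds 0) := by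
    have h1 : Filter.Tendsto (fun t : ℝ => -ξ*t) Filter.atTop Filter.atBot :=
      Filter.Tendsto.const_mul_atTop_of_neg (neg_lt_zero.mpr hξ) Filter.tendsto_id
    have h2 := Real.tendsto_exp_atBot.comp h1
    have h3 := (h2.neg).div_const ξ
    simpa using h3
  have h := MeasureTheory.integral_Ioi_of_hasDerivAt_of_tendsto' hderiv
    (exp_neg_integrableOn_Ioi 1 hξ) hlim
  rw [h, mul_one]
  ring

open MeasureTheory Set Real in
lemma myDBound {ξ : ℝ} (hξ : 0 < ξ) :
    0 ≤ Real.exp ξ - T0 ξ ∧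
      Real.exp ξ - T0 ξ ≤ ξ ^ ((1:ℝ)/2) / (Real.sqrt Real.pi * ξ) := by
  set g : ℝ → ℝ := fun t => t ^ (-(1/2):ℝ) * Real.exp (ξ*(1-t)) with hg
  set c : ℝ := ξ ^ ((1:ℝ)/2) / Real.sqrt Real.pi with hc
  have hx : ξ ^ ((1:ℝ)/2) ≠ 0 := ne_of_gt (Real.rpow_pos_of_pos hξ _)
  have hsπ : Real.sqrt Real.pi ≠ 0 := ne_of_gt (Real.sqrt_pos.mpr Real.pi_pos)
  have hcpos : 0 < c :=
    div_pos (Real.rpow_pos_of_pos hξ _) (Real.sqrt_pos.mpr Real.pi_pos)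
  have hsplit : ∫ t in Ioi (0:ℝ), g t
      = (∫ t in Ioc (0:ℝ) 1, g t) + ∫ t in Ioi (1:ℝ), g t := by
    rw [← MeasureTheory.setIntegral_union (Set.Ioc_disjoint_Ioi le_rfl) measurableSet_Ioi
      myIntOnExp (myTailIntegrable hξ), Set.Ioc_union_Ioi_eq_Ioi zero_le_one]
  have hexp : Real.exp ξ = c * ∫ t in Ioi (0:ℝ), g t := by
    rw [hg, myFullLine hξ, hc, Real.Gamma_one_half_eq,
      show (1:ℝ)/ξ = ξ⁻¹ from one_div ξ, Real.inv_rpow hξ.le]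
    field_simp
  have hT0 : T0 ξ = c * ∫ t in Ioc (0:ℝ) 1, g t := myKeySwap hξ
  have hD : Real.exp ξ - T0 ξ = c * ∫ t in Ioi (1:ℝ), g t := by
    rw [hexp, hT0, hsplit]; ring
  have htail_nonneg : 0 ≤ ∫ t in Ioi (1:ℝ), g t := by
    apply MeasureTheory.setIntegral_nonneg measurableSet_Ioi
    intro t ht
    apply mul_nonneg (Real.rpow_nonneg (by linarith [mem_Ioi.mp ht]) _) (Real.exp_pos _).le
  have htail_le : ∫ t in Ioi (1:ℝ), g t ≤ 1/ξ := by
    have hmono : ∫ t in Ioi (1:ℝ), g t ≤ ∫ t in Ioi (1:ℝ), Real.exp ξ * Real.exp (-ξ*t) := by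
      apply MeasureTheory.setIntegral_mono_on (myTailIntegrable hξ)
        ((exp_neg_integrableOn_Ioi 1 hξ).const_mul _) measurableSet_Ioi
      intro t ht
      have ht1 : (1:ℝ) ≤ t := le_of_lt (mem_Ioi.mp ht)
      have h1 : t ^ (-(1/2):ℝ) ≤ 1 :=
        Real.rpow_le_one_of_one_le_of_nonpos ht1 (by norm_num)
      have h3 : Real.exp (ξ*(1-t)) = Real.exp ξ * Real.exp (-ξ*t) := by
        rw [← Real.exp_add]; ring_nf
      show t ^ (-(1/2):ℝ) * Real.exp (ξ*(1-t)) ≤ Real.exp ξ * Real.exp (-ξ*t)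
      rw [h3]
      calc t ^ (-(1/2):ℝ) * (Real.exp ξ * Real.exp (-ξ*t))
          ≤ 1 * (Real.exp ξ * Real.exp (-ξ*t)) :=
            mul_le_mul_of_nonneg_right h1 (by positivity)
        _ = Real.exp ξ * Real.exp (-ξ*t) := by ring
    have hval : ∫ t in Ioi (1:ℝ), Real.exp ξ * Real.exp (-ξ*t) = 1/ξ := by
      rw [MeasureTheory.integral_const_mul, myExpTail hξ,
        show Real.exp ξ * (Real.exp (-ξ)/ξ) = (Real.exp ξ * Real.exp (-ξ))/ξ by ring,
        ← Real.exp_add]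
      simp
    calc ∫ t in Ioi (1:ℝ), g t ≤ ∫ t in Ioi (1:ℝ), Real.exp ξ * Real.exp (-ξ*t) := hmono
      _ = 1/ξ := hval
  constructor
  · rw [hD]; exact mul_nonneg hcpos.le htail_nonneg
  · rw [hD, hc]
    calc ξ ^ ((1:ℝ)/2) / Real.sqrt Real.pi * ∫ t in Ioi (1:ℝ), g t
        ≤ ξ ^ ((1:ℝ)/2) / Real.sqrt Real.pi * (1/ξ) :=
          mul_le_mul_of_nonneg_left htail_le hcpos.le
      _ = ξ ^ ((1:ℝ)/2) / (Real.sqrt Real.pi * ξ) := by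
          field_simp

open Real in
lemma myVstarEq {ξ : ℝ} (hξ : 0 < ξ) :
    Vstar ξ = (Real.exp ξ - T0 ξ) - 1 + ξ ^ ((1:ℝ)/2) * (2 / Real.sqrt Real.pi) := by
  have hS : Summable (fun n : ℕ => ξ^n / (n.factorial : ℝ)) := Real.summable_pow_div_factorial ξ
  have h1 : ∑' k : ℕ, ξ ^ (k + 1) / (Nat.factorial (k + 1) : ℝ) = Real.exp ξ - 1 := by
    have h := Summable.tsum_eq_zero_add hS
    rw [myExpSeries ξ] at h
    simp only [pow_zero, Nat.factorial_zero, Nat.cast_one, div_one] at h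
    linarith
  have hT : Summable (fun k : ℕ => ξ ^ ((k:ℝ) + 1/2) / Real.Gamma ((k:ℝ) + 3/2)) :=
    myT0Summable hξ
  have h2 : ∑' k : ℕ, ξ ^ (((k : ℝ) + 1) + 1 / 2) / Real.Gamma (((k : ℝ) + 1) + 3 / 2)
      = T0 ξ - ξ ^ ((1:ℝ)/2) * (2 / Real.sqrt Real.pi) := by
    have h3 := Summable.tsum_eq_zero_add hT
    have h4 : ∑' k : ℕ, ξ ^ ((((k+1):ℕ):ℝ) + 1/2) / Real.Gamma ((((k+1):ℕ):ℝ) + 3/2)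
        = ∑' k : ℕ, ξ ^ (((k : ℝ) + 1) + 1 / 2) / Real.Gamma (((k : ℝ) + 1) + 3 / 2) := by
      apply tsum_congr
      intro k
      push_cast
      ring_nf
    have h5 : ξ ^ (((0:ℕ):ℝ) + 1/2) / Real.Gamma (((0:ℕ):ℝ) + 3/2)
        = ξ ^ ((1:ℝ)/2) * (2 / Real.sqrt Real.pi) := by
      have hg : Real.Gamma (((0:ℕ):ℝ) + 3/2) = Real.sqrt Real.pi / 2 := by
        rw [myGammaProd 0, Finset.prod_range_one]
        push_cast
        ring
      rw [hg]
      have hsπ : Real.sqrt Real.pi ≠ 0 := ne_of_gt (Real.sqrt_pos.mpr Real.pi_pos)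
      rw [show (((0:ℕ):ℝ) + 1/2) = (1:ℝ)/2 by norm_num]
      field_simp
    have hT0 : T0 ξ = ∑' k : ℕ, ξ ^ ((k:ℝ) + 1/2) / Real.Gamma ((k:ℝ) + 3/2) := rfl
    rw [hT0, h3, h4, h5]
    ring
  rw [Vstar, h1, h2]
  ring

open Asymptotics in
/-- `ε · V*_{1/2}(1/ε²) → 2/√π` as `ε → 0⁺`; in particular
`V*_{1/2}(1/ε²) = O(1/ε)` and `θ = -1/V*_{1/2}(1/ε²) = O(ε)`. -/
theorem stmt_8 :
    Filter.Tendsto (fun ε : ℝ => ε * Vstar (1 / ε ^ 2))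
        (nhdsWithin 0 (Set.Ioi 0)) (nhds (2 / Real.sqrt Real.pi)) ∧
      (fun ε : ℝ => Vstar (1 / ε ^ 2)) =O[nhdsWithin 0 (Set.Ioi 0)] (fun ε : ℝ => 1 / ε) ∧
      (fun ε : ℝ => -1 / Vstar (1 / ε ^ 2)) =O[nhdsWithin 0 (Set.Ioi 0)] (fun ε : ℝ => ε) := by
  set l := nhdsWithin (0:ℝ) (Set.Ioi 0) with hl
  have hmem : ∀ᶠ ε : ℝ in l, 0 < ε := by
    filter_upwards [self_mem_nhdsWithin] with ε hε using hε
  have hξpos : ∀ ε : ℝ, 0 < ε → (0:ℝ) < 1/ε^2 := fun ε hε => by positivity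
  have hroot : ∀ ε : ℝ, 0 < ε → ((1:ℝ)/ε^2) ^ ((1:ℝ)/2) = 1/ε := by
    intro ε hε
    rw [show (1:ℝ)/ε^2 = (1/ε)^(2:ℕ) by rw [div_pow]; norm_num,
      ← Real.rpow_natCast (1/ε) 2, ← Real.rpow_mul (by positivity)]
    rw [show ((2:ℕ):ℝ) * ((1:ℝ)/2) = 1 by norm_num, Real.rpow_one]
  have hdecomp : ∀ ε : ℝ, 0 < ε →
      ε * Vstar (1/ε^2)
        = ε * (Real.exp (1/ε^2) - T0 (1/ε^2)) - ε + 2 / Real.sqrt Real.pi := by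
    intro ε hε
    have hεne : ε ≠ 0 := hε.ne'
    rw [myVstarEq (hξpos ε hε), hroot ε hε]
    field_simp
  have hD0 : Filter.Tendsto (fun ε : ℝ => ε * (Real.exp (1/ε^2) - T0 (1/ε^2))) l (nhds 0) := by
    apply squeeze_zero' (hmem.mono fun ε hε => mul_nonneg hε.le (myDBound (hξpos ε hε)).1)
      (g := fun ε : ℝ => ε * ε / Real.sqrt Real.pi)
    · apply hmem.mono
      intro ε hε
      have hb := (myDBound (hξpos ε hε)).2
      rw [hroot ε hε] at hb
      have heq : (1:ℝ)/ε / (Real.sqrt Real.pi * (1/ε^2)) = ε / Real.sqrt Real.pi := by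
        have hsπ : Real.sqrt Real.pi ≠ 0 := ne_of_gt (Real.sqrt_pos.mpr Real.pi_pos)
        have hεne : ε ≠ 0 := hε.ne'
        field_simp
      rw [heq] at hb
      calc ε * (Real.exp (1/ε^2) - T0 (1/ε^2)) ≤ ε * (ε / Real.sqrt Real.pi) :=
            mul_le_mul_of_nonneg_left hb hε.le
        _ = ε * ε / Real.sqrt Real.pi := by ring
    · have h : Filter.Tendsto (fun ε : ℝ => ε * ε / Real.sqrt Real.pi) (nhds 0) (nhds 0) := by
        have h := ((continuous_id.mul continuous_id).div_const (Real.sqrt Real.pi)).tendsto 0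
        simpa using h
      exact h.mono_left nhdsWithin_le_nhds
  have hid : Filter.Tendsto (fun ε : ℝ => ε) l (nhds 0) := by
    have : Filter.Tendsto (fun ε : ℝ => ε) (nhds (0:ℝ)) (nhds 0) := Filter.tendsto_id
    exact this.mono_left nhdsWithin_le_nhds
  have hmain : Filter.Tendsto (fun ε : ℝ => ε * Vstar (1 / ε ^ 2)) l
      (nhds (2 / Real.sqrt Real.pi)) := by
    have h1 : Filter.Tendsto
        (fun ε : ℝ => ε * (Real.exp (1/ε^2) - T0 (1/ε^2)) - ε + 2 / Real.sqrt Real.pi) l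
        (nhds (2 / Real.sqrt Real.pi)) := by
      have h2 := (hD0.sub hid).add_const (2 / Real.sqrt Real.pi)
      simpa using h2
    exact h1.congr' ((hmem.mono fun ε hε => (hdecomp ε hε).symm))
  refine ⟨hmain, ?_, ?_⟩
  · have h1 : (fun ε : ℝ => ε * Vstar (1/ε^2)) =O[l] (fun _ : ℝ => (1:ℝ)) :=
      hmain.isBigO_one ℝ
    have h2 : (fun ε : ℝ => (1/ε) * (ε * Vstar (1/ε^2))) =O[l]
        (fun ε : ℝ => (1/ε) * 1) := (Asymptotics.isBigO_refl (fun ε : ℝ => 1/ε) l).mul h1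
    have h3 : (fun ε : ℝ => Vstar (1/ε^2)) =ᶠ[l] (fun ε : ℝ => (1/ε) * (ε * Vstar (1/ε^2))) :=
      hmem.mono fun ε hε => by field_simp
    exact h2.congr' h3.symm (Filter.Eventually.of_forall fun ε => by ring)
  · have hne : (2 / Real.sqrt Real.pi : ℝ) ≠ 0 := by
      have h := Real.sqrt_pos.mpr Real.pi_pos
      positivity
    have hinv : Filter.Tendsto (fun ε : ℝ => -1 / (ε * Vstar (1/ε^2))) l
        (nhds (-1 / (2 / Real.sqrt Real.pi))) :=
      Filter.Tendsto.div (tendsto_const_nhds) hmain hne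
    have h1 : (fun ε : ℝ => -1 / (ε * Vstar (1/ε^2))) =O[l] (fun _ : ℝ => (1:ℝ)) :=
      hinv.isBigO_one ℝ
    have h2 : (fun ε : ℝ => ε * (-1 / (ε * Vstar (1/ε^2)))) =O[l]
        (fun ε : ℝ => ε * 1) := (Asymptotics.isBigO_refl (fun ε : ℝ => ε) l).mul h1
    have h3 : (fun ε : ℝ => -1 / Vstar (1/ε^2)) =ᶠ[l]
        (fun ε : ℝ => ε * (-1 / (ε * Vstar (1/ε^2)))) := by
      apply hmem.mono
      intro ε hε
      by_cases hV : Vstar (1/ε^2) = 0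
      · simp only [hV, div_zero, mul_zero]
      · field_simp
    exact h2.congr' h3.symm (Filter.Eventually.of_forall fun ε => by ring)
end

section
/- Fix x₀ ∈ (0, 1]. Then, as ε → 0⁺, the layer correction V_{1/2}(x₀) = 1 − V*_{1/2}(x₀/ε²)/V*_{1/2}(1/ε²) converges to 1 − √x₀. Equivalently, lim_{ε→0⁺} V*_{1/2}(x₀/ε²)/V*_{1/2}(1/ε²) = √x₀. In particular, the pointwise limit of the layer correction is not 0 for x₀ ∈ (0,1), so V_{1/2} is not a classical (exponentially decaying) boundary layer function. -/
open Real Filter MeasureTheory Set Topology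

/-! ### Gamma function estimates -/

lemma gpos (n : ℕ) : 0 < Real.Gamma ((n:ℝ) + 3/2) := Real.Gamma_pos_of_pos (by positivity)

lemma hpos (n : ℕ) : 0 < Real.Gamma ((n:ℝ) + 1/2) := Real.Gamma_pos_of_pos (by positivity)

lemma grec (n : ℕ) : Real.Gamma (((n:ℝ)+1) + 3/2) = ((n:ℝ)+3/2) * Real.Gamma ((n:ℝ)+3/2) := by
  have := Real.Gamma_add_one (s := (n:ℝ)+3/2) (by positivity)
  rw [show ((n:ℝ)+1) + 3/2 = ((n:ℝ)+3/2) + 1 by ring, this]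

lemma gh (n : ℕ) : Real.Gamma ((n:ℝ) + 3/2) = ((n:ℝ)+1/2) * Real.Gamma ((n:ℝ)+1/2) := by
  have := Real.Gamma_add_one (s := (n:ℝ)+1/2) (by positivity)
  rw [show (n:ℝ) + 3/2 = ((n:ℝ)+1/2) + 1 by ring, this]

lemma g0 : Real.Gamma ((3:ℝ)/2) = Real.sqrt π / 2 := by
  have h := Real.Gamma_add_one (s := (1:ℝ)/2) (by norm_num)
  rw [show (3:ℝ)/2 = 1/2 + 1 by norm_num, h, Real.Gamma_one_half_eq]
  ring

lemma g_ge (n : ℕ) : (n.factorial : ℝ) * (Real.sqrt π / 2) ≤ Real.Gamma ((n:ℝ) + 3/2) := by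
  induction n with
  | zero =>
    norm_num [g0]
  | succ k ih =>
    have hfac : (0:ℝ) < (k.factorial : ℝ) := by exact_mod_cast Nat.factorial_pos k
    rw [Nat.factorial_succ]
    push_cast
    rw [grec k]
    calc ((k:ℝ)+1) * (k.factorial : ℝ) * (Real.sqrt π / 2)
        ≤ ((k:ℝ)+3/2) * ((k.factorial : ℝ) * (Real.sqrt π / 2)) := by
          nlinarith [Real.sqrt_nonneg π, Nat.cast_nonneg (α := ℝ) k]
      _ ≤ ((k:ℝ)+3/2) * Real.Gamma ((k:ℝ)+3/2) := by nlinarith [ih, Nat.cast_nonneg (α := ℝ) k]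

lemma h_ge (n : ℕ) : Real.sqrt π * (n.factorial : ℝ) / 2^n ≤ Real.Gamma ((n:ℝ) + 1/2) := by
  induction n with
  | zero => norm_num [show ((0:ℝ)+1/2) = 1/2 by norm_num, Real.Gamma_one_half_eq]
  | succ k ih =>
    have hrec : Real.Gamma (((k:ℝ)+1) + 1/2) = ((k:ℝ)+1/2) * Real.Gamma ((k:ℝ)+1/2) := by
      have := Real.Gamma_add_one (s := (k:ℝ)+1/2) (by positivity)
      rw [show ((k:ℝ)+1) + 1/2 = ((k:ℝ)+1/2) + 1 by ring, this]
    rw [Nat.factorial_succ]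
    push_cast
    rw [hrec]
    have hk2 : ((k:ℝ)+1)/2 ≤ (k:ℝ)+1/2 := by linarith [Nat.cast_nonneg (α := ℝ) k]
    calc Real.sqrt π * (((k:ℝ)+1) * (k.factorial:ℝ)) / 2^(k+1)
        = (((k:ℝ)+1)/2) * (Real.sqrt π * (k.factorial:ℝ) / 2^k) := by ring
      _ ≤ ((k:ℝ)+1/2) * Real.Gamma ((k:ℝ)+1/2) := by
          apply mul_le_mul hk2 ih (by positivity)
          linarith [Nat.cast_nonneg (α := ℝ) k]

/-! ### The auxiliary series `F` -/

noncomputable def Ff (x : ℝ) : ℝ := ∑' n : ℕ, x ^ (2*n+1) / Real.Gamma ((n:ℝ) + 3/2)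

lemma sqrtpi_pos : (0:ℝ) < Real.sqrt π := Real.sqrt_pos.2 Real.pi_pos

lemma Ff_term_bound (x : ℝ) (n : ℕ) :
    ‖x ^ (2*n+1) / Real.Gamma ((n:ℝ) + 3/2)‖ ≤ (2/Real.sqrt π * |x|) * ((x^2)^n / n.factorial) := by
  have hg := gpos n
  have hge := g_ge n
  have hsq := sqrtpi_pos
  have hfac : (0:ℝ) < (n.factorial:ℝ) := by exact_mod_cast n.factorial_pos
  have h1 : ‖x ^ (2*n+1) / Real.Gamma ((n:ℝ) + 3/2)‖ = |x|^(2*n+1) / Real.Gamma ((n:ℝ)+3/2) := by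
    rw [norm_div, Real.norm_eq_abs, Real.norm_eq_abs, abs_of_pos hg, abs_pow]
  rw [h1]
  have h2 : |x|^(2*n+1)/Real.Gamma ((n:ℝ)+3/2) ≤ |x|^(2*n+1)/((n.factorial:ℝ) * (Real.sqrt π/2)) := by
    gcongr
  refine h2.trans (le_of_eq ?_)
  rw [pow_succ, pow_mul, sq_abs]
  field_simp

lemma Ff_summable (x : ℝ) : Summable (fun n : ℕ => x ^ (2*n+1) / Real.Gamma ((n:ℝ) + 3/2)) :=
  Summable.of_norm_bounded ((Real.summable_pow_div_factorial (x^2)).mul_left _) (Ff_term_bound x)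

lemma Ff_zero : Ff 0 = 0 := by
  have h : ∀ n : ℕ, (0:ℝ)^(2*n+1)/Real.Gamma ((n:ℝ)+3/2) = 0 := by
    intro n
    rw [zero_pow (by omega)]
    simp
  rw [Ff, tsum_congr h, tsum_zero]

lemma deriv_term_eq (x : ℝ) (n : ℕ) :
    ((2*n+1 : ℕ):ℝ) * x^(2*n) / Real.Gamma ((n:ℝ)+3/2) = 2 * x^(2*n)/Real.Gamma ((n:ℝ)+1/2) := by
  rw [gh n]
  have := (hpos n).ne'
  push_cast
  field_simp

lemma deriv_sum_summable (x : ℝ) : Summable (fun n : ℕ => 2 * x^(2*n)/Real.Gamma ((n:ℝ)+1/2)) := by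
  apply Summable.of_norm_bounded (g := fun n => (2/Real.sqrt π) * ((2*x^2)^n / n.factorial))
  · exact (Real.summable_pow_div_factorial (2*x^2)).mul_left _
  · intro n
    have hh := hpos n
    have hge := h_ge n
    have hsq := sqrtpi_pos
    have hfac : (0:ℝ) < (n.factorial:ℝ) := by exact_mod_cast n.factorial_pos
    have h1 : ‖2 * x^(2*n)/Real.Gamma ((n:ℝ)+1/2)‖ = 2 * |x|^(2*n)/Real.Gamma ((n:ℝ)+1/2) := by
      rw [norm_div, norm_mul, Real.norm_eq_abs, Real.norm_eq_abs, Real.norm_eq_abs,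
        abs_of_pos hh, abs_pow]
      norm_num
    rw [h1]
    have h2 : 2 * |x|^(2*n)/Real.Gamma ((n:ℝ)+1/2) ≤ 2 * |x|^(2*n)/(Real.sqrt π * (n.factorial:ℝ)/2^n) := by
      gcongr
    refine h2.trans (le_of_eq ?_)
    rw [pow_mul, sq_abs, mul_pow]
    field_simp

lemma Ff_hasDerivAt (x : ℝ) : HasDerivAt Ff (2/Real.sqrt π + 2*x*Ff x) x := by
  set R : ℝ := |x| + 1 with hR
  have hxR : x ∈ Metric.ball (0:ℝ) R := by
    simp only [Metric.mem_ball, dist_zero_right, Real.norm_eq_abs, hR]; linarith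
  have key : HasDerivAt (fun y => ∑' n : ℕ, y ^ (2*n+1) / Real.Gamma ((n:ℝ) + 3/2))
      (∑' n : ℕ, ((2*n+1 : ℕ):ℝ) * x^(2*n) / Real.Gamma ((n:ℝ)+3/2)) x := by
    refine hasDerivAt_tsum_of_isPreconnected
      (u := fun n : ℕ => (2/Real.sqrt π) * ((2*R^2)^n / n.factorial))
      (t := Metric.ball (0:ℝ) R)
      (g := fun (n : ℕ) (y : ℝ) => y ^ (2*n+1) / Real.Gamma ((n:ℝ) + 3/2))
      (g' := fun (n : ℕ) (y : ℝ) => ((2*n+1 : ℕ):ℝ) * y^(2*n) / Real.Gamma ((n:ℝ)+3/2))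
      ((Real.summable_pow_div_factorial (2*R^2)).mul_left _)
      Metric.isOpen_ball ((convex_ball (0:ℝ) R).isPreconnected) ?_ ?_ hxR (Ff_summable x) hxR
    · intro n y hy
      simpa using ((hasDerivAt_pow (2*n+1) y).div_const (Real.Gamma ((n:ℝ)+3/2)))
    · intro n y hy
      have hyR : |y| ≤ R := by
        simp only [Metric.mem_ball, dist_zero_right, Real.norm_eq_abs] at hy; linarith
      have hh := hpos n
      have hge := h_ge n
      have hsq := sqrtpi_pos
      have hfac : (0:ℝ) < (n.factorial:ℝ) := by exact_mod_cast n.factorial_pos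
      have h1 : ‖2 * y^(2*n)/Real.Gamma ((n:ℝ)+1/2)‖ = 2 * |y|^(2*n)/Real.Gamma ((n:ℝ)+1/2) := by
        rw [norm_div, norm_mul, Real.norm_eq_abs, Real.norm_eq_abs, Real.norm_eq_abs,
          abs_of_pos hh, abs_pow]
        norm_num
      show ‖((2*n+1 : ℕ):ℝ) * y^(2*n) / Real.Gamma ((n:ℝ)+3/2)‖ ≤ (2/Real.sqrt π) * ((2*R^2)^n / n.factorial)
      rw [deriv_term_eq, h1]
      have h2 : 2*|y|^(2*n)/Real.Gamma ((n:ℝ)+1/2) ≤ 2*R^(2*n)/(Real.sqrt π * (n.factorial:ℝ)/2^n) := by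
        gcongr
        all_goals first | exact hyR | positivity | exact abs_nonneg y
      refine h2.trans (le_of_eq ?_)
      rw [pow_mul, mul_pow]
      field_simp
  have hid : ∑' n : ℕ, ((2*n+1 : ℕ):ℝ) * x^(2*n) / Real.Gamma ((n:ℝ)+3/2)
      = 2/Real.sqrt π + 2*x*Ff x := by
    rw [tsum_congr (deriv_term_eq x)]
    rw [Summable.tsum_eq_zero_add (deriv_sum_summable x)]
    congr 1
    · norm_num [Real.Gamma_one_half_eq]
    · have heq : ∀ n : ℕ, 2 * x^(2*(n+1))/Real.Gamma (((n:ℕ):ℝ)+1+1/2)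
          = 2*x * (x^(2*n+1) / Real.Gamma ((n:ℝ)+3/2)) := by
        intro n
        rw [show ((n:ℝ)+1+1/2) = (n:ℝ)+3/2 by ring]
        rw [show 2*(n+1) = (2*n+1)+1 by ring, pow_succ]
        ring
      calc ∑' n : ℕ, 2 * x^(2*(n+1))/Real.Gamma (((n+1:ℕ):ℝ)+1/2)
          = ∑' n : ℕ, 2*x * (x^(2*n+1) / Real.Gamma ((n:ℝ)+3/2)) := by
            apply tsum_congr; intro n; push_cast [heq n]; ring
        _ = 2*x*Ff x := by rw [tsum_mul_left]; rfl
  rw [← hid]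
  exact key

/-! ### Solving the ODE: closed form for `F` -/

noncomputable def erfInt (x : ℝ) : ℝ := ∫ t in (0:ℝ)..x, Real.exp (-t^2)

lemma cont_gauss : Continuous fun t : ℝ => Real.exp (-t^2) := by fun_prop

lemma erfInt_hasDerivAt (x : ℝ) : HasDerivAt erfInt (Real.exp (-x^2)) x := by
  refine intervalIntegral.integral_hasDerivAt_right
    (cont_gauss.intervalIntegrable 0 x)
    (cont_gauss.stronglyMeasurableAtFilter _ _) cont_gauss.continuousAt

lemma Ff_eq (x : ℝ) : Ff x = 2/Real.sqrt π * Real.exp (x^2) * erfInt x := by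
  set H : ℝ → ℝ := fun y => Real.exp (-y^2) * Ff y - 2/Real.sqrt π * erfInt y with hH
  have hderiv : ∀ y, HasDerivAt H 0 y := by
    intro y
    have h1 : HasDerivAt (fun y : ℝ => Real.exp (-y^2)) (-(2*y) * Real.exp (-y^2)) y := by
      have : HasDerivAt (fun y : ℝ => -y^2) (-(2*y)) y := by
        simpa using ((hasDerivAt_pow 2 y).fun_neg)
      simpa [mul_comm] using this.exp
    have h2 := (h1.mul (Ff_hasDerivAt y)).sub ((erfInt_hasDerivAt y).const_mul (2/Real.sqrt π))
    have h0 : (0:ℝ) = -(2 * y) * Real.exp (-y ^ 2) * Ff y + Real.exp (-y ^ 2) * (2 / Real.sqrt π + 2 * y * Ff y) - 2 / Real.sqrt π * Real.exp (-y ^ 2) := by ring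
    rw [h0]; exact h2
  have hconst : H x = H 0 := by
    have hdiff : Differentiable ℝ H := fun y => (hderiv y).differentiableAt
    exact is_const_of_deriv_eq_zero hdiff (fun y => (hderiv y).deriv) x 0
  have hH0 : H 0 = 0 := by simp [hH, Ff_zero, erfInt]
  have hx : Real.exp (-x^2) * Ff x = 2/Real.sqrt π * erfInt x := by
    have := hconst.trans hH0
    simp only [hH] at this
    linarith
  have hmul : Real.exp (x^2) * (Real.exp (-x^2) * Ff x) = Ff x := by
    rw [← mul_assoc, ← Real.exp_add]; simp
  rw [← hmul, hx]; ring

/-! ### Gaussian tail estimates -/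

noncomputable def Tail (x : ℝ) : ℝ := ∫ t in Ioi x, Real.exp (-t^2)

lemma gauss_integrableOn (s : Set ℝ) : IntegrableOn (fun t : ℝ => Real.exp (-t^2)) s := by
  have := integrable_exp_neg_mul_sq (b := (1:ℝ)) one_pos
  simp only [neg_mul, one_mul] at this
  exact this.integrableOn

lemma erfInt_add_tail {x : ℝ} (hx : 0 ≤ x) : erfInt x + Tail x = Real.sqrt π / 2 := by
  have hsplit : (∫ t in Ioi (0:ℝ), Real.exp (-t^2))
      = (∫ t in Ioc 0 x, Real.exp (-t^2)) + ∫ t in Ioi x, Real.exp (-t^2) := by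
    rw [← setIntegral_union (Ioc_disjoint_Ioi le_rfl) measurableSet_Ioi
      (gauss_integrableOn _) (gauss_integrableOn _), Ioc_union_Ioi_eq_Ioi hx]
  have hg : (∫ t in Ioi (0:ℝ), Real.exp (-t^2)) = Real.sqrt π / 2 := by
    have := integral_gaussian_Ioi 1
    simpa using this
  have hio : erfInt x = ∫ t in Ioc 0 x, Real.exp (-t^2) := intervalIntegral.integral_of_le hx
  rw [hio, Tail, ← hsplit, hg]

lemma tail_pos (x : ℝ) : 0 < Tail x := by
  rw [Tail]
  rw [setIntegral_pos_iff_support_of_nonneg_ae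
    (Filter.Eventually.of_forall fun t => (Real.exp_pos _).le) (gauss_integrableOn _)]
  have : (Function.support fun t : ℝ => Real.exp (-t^2)) = univ := by
    ext t; simp [Function.mem_support, (Real.exp_pos _).ne']
  rw [this, univ_inter]
  simp [Real.volume_Ioi]

lemma tail_le {x : ℝ} (hx : 0 < x) : Tail x ≤ Real.exp (-x^2) / (2*x) := by
  have h2x : (0:ℝ) < 2*x := by linarith
  have hint : IntegrableOn (fun t : ℝ => Real.exp (x^2) * Real.exp (-(2*x)*t)) (Ioi x) :=
    (exp_neg_integrableOn_Ioi x h2x).const_mul _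
  have hmono : Tail x ≤ ∫ t in Ioi x, Real.exp (x^2) * Real.exp (-(2*x)*t) := by
    apply setIntegral_mono_on (gauss_integrableOn _) hint measurableSet_Ioi
    intro t _
    rw [← Real.exp_add]
    apply Real.exp_le_exp.2
    nlinarith [sq_nonneg (x - t)]
  have hval : (∫ t in Ioi x, Real.exp (x^2) * Real.exp (-(2*x)*t)) = Real.exp (-x^2)/(2*x) := by
    rw [MeasureTheory.integral_const_mul]
    have hc : (∫ t in Ioi x, Real.exp (-(2*x)*t))
        = (2*x)⁻¹ * ∫ u in Ioi ((2*x)*x), Real.exp (-u) := by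
      have := integral_comp_mul_left_Ioi (fun u => Real.exp (-u)) x h2x
      simp only [smul_eq_mul] at this
      simpa [neg_mul] using this
    rw [hc, integral_exp_neg_Ioi]
    rw [mul_comm (rexp (x^2)), mul_assoc, ← Real.exp_add,
      show -(2*x*x) + x^2 = -x^2 by ring, div_eq_inv_mul]
  linarith [hmono, hval.le]

/-! ### Closed form and bounds for `Vstar` -/

noncomputable def Dd (ξ : ℝ) : ℝ := Real.exp ξ - Ff (Real.sqrt ξ)

lemma sum_exp (ξ : ℝ) : ∑' k : ℕ, ξ ^ (k + 1) / (Nat.factorial (k + 1) : ℝ) = Real.exp ξ - 1 := by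
  have he : Real.exp ξ = ∑' n : ℕ, ξ ^ n / (n.factorial : ℝ) := by
    rw [Real.exp_eq_exp_ℝ, NormedSpace.exp_eq_tsum_div]
  rw [he, Summable.tsum_eq_zero_add (Real.summable_pow_div_factorial ξ)]
  simp

lemma rpow_eq (ξ : ℝ) (hξ : 0 ≤ ξ) (k : ℕ) :
    ξ ^ (((k : ℝ) + 1) + 1 / 2) = Real.sqrt ξ ^ (2*(k+1)+1) := by
  rw [Real.sqrt_eq_rpow, ← Real.rpow_natCast (ξ ^ ((1:ℝ)/2)), ← Real.rpow_mul hξ]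
  congr 1
  push_cast
  ring

lemma sum_two (ξ : ℝ) (hξ : 0 ≤ ξ) :
    ∑' k : ℕ, ξ ^ (((k : ℝ) + 1) + 1 / 2) / Real.Gamma (((k : ℝ) + 1) + 3 / 2)
      = Ff (Real.sqrt ξ) - 2 * Real.sqrt ξ / Real.sqrt π := by
  set x := Real.sqrt ξ
  have hterm : ∀ k : ℕ, ξ ^ (((k : ℝ) + 1) + 1 / 2) / Real.Gamma (((k : ℝ) + 1) + 3 / 2)
      = x ^ (2*(k+1)+1) / Real.Gamma (((k+1 : ℕ):ℝ) + 3/2) := by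
    intro k
    rw [rpow_eq ξ hξ k]
    norm_num
    rfl
  rw [tsum_congr hterm]
  have hFf : Ff x = x ^ (2*0+1) / Real.Gamma (((0:ℕ):ℝ) + 3/2)
      + ∑' k : ℕ, x ^ (2*(k+1)+1) / Real.Gamma (((k+1 : ℕ):ℝ) + 3/2) := by
    rw [Ff]
    exact Summable.tsum_eq_zero_add (Ff_summable x)
  have h0 : x ^ (2*0+1) / Real.Gamma (((0:ℕ):ℝ) + 3/2) = 2 * x / Real.sqrt π := by
    norm_num [show ((0:ℝ) + 3/2 : ℝ) = 3/2 by norm_num, g0]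
    rw [div_div_eq_mul_div, mul_comm]
  linarith [hFf, h0]

lemma Vstar_eq_s9 (ξ : ℝ) (hξ : 0 ≤ ξ) :
    Vstar ξ = 2 * Real.sqrt ξ / Real.sqrt π - 1 + Dd ξ := by
  rw [Vstar, sum_exp, sum_two ξ hξ, Dd]
  ring

lemma Dd_eq {ξ : ℝ} (hξ : 0 ≤ ξ) :
    Dd ξ = 2/Real.sqrt π * Real.exp ξ * Tail (Real.sqrt ξ) := by
  have hx : 0 ≤ Real.sqrt ξ := Real.sqrt_nonneg ξ
  have h1 : erfInt (Real.sqrt ξ) = Real.sqrt π / 2 - Tail (Real.sqrt ξ) := by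
    linarith [erfInt_add_tail hx]
  have h2 : Real.sqrt ξ ^ 2 = ξ := Real.sq_sqrt hξ
  rw [Dd, Ff_eq, h1, h2]
  field_simp
  ring

lemma Dd_pos {ξ : ℝ} (hξ : 0 ≤ ξ) : 0 < Dd ξ := by
  rw [Dd_eq hξ]
  have := tail_pos (Real.sqrt ξ)
  have := Real.exp_pos ξ
  have := sqrtpi_pos
  positivity

lemma Dd_le {ξ : ℝ} (hξ : 1 ≤ ξ) : Dd ξ ≤ 1 := by
  have h0 : (0:ℝ) ≤ ξ := by linarith
  have hx1 : 1 ≤ Real.sqrt ξ := Real.one_le_sqrt.2 hξ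
  have hxpos : 0 < Real.sqrt ξ := by linarith
  have hsq : Real.sqrt ξ ^ 2 = ξ := Real.sq_sqrt h0
  have hpi : 1 ≤ Real.sqrt π := Real.one_le_sqrt.2 (by linarith [Real.pi_gt_three])
  have ht := tail_le hxpos
  rw [Dd_eq h0]
  calc 2/Real.sqrt π * Real.exp ξ * Tail (Real.sqrt ξ)
      ≤ 2/Real.sqrt π * Real.exp ξ * (Real.exp (-Real.sqrt ξ^2) / (2*Real.sqrt ξ)) := by
        apply mul_le_mul_of_nonneg_left ht
        positivity
    _ = 1 / (Real.sqrt π * Real.sqrt ξ) := by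
        rw [hsq, mul_assoc, ← mul_div_assoc, ← Real.exp_add, add_neg_cancel, Real.exp_zero]
        rw [div_mul_eq_mul_div, one_div, mul_inv]
        field_simp
    _ ≤ 1 := by
        rw [div_le_one (by positivity)]
        nlinarith

/-! ### The limit -/

lemma sqrt_tendsto : Tendsto Real.sqrt atTop atTop :=
  (tendsto_rpow_atTop (by norm_num : (0:ℝ) < 1/2)).congr fun t => (Real.sqrt_eq_rpow t).symm

lemma vstar_tendsto (c : ℝ) (hc : 0 < c) :
    Tendsto (fun t : ℝ => Vstar (c*t) / Real.sqrt t) atTop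
      (𝓝 (2 * Real.sqrt c / Real.sqrt π)) := by
  have hr : Tendsto (fun t : ℝ => Vstar (c*t)/Real.sqrt t - 2*Real.sqrt c/Real.sqrt π)
      atTop (𝓝 0) := by
    apply squeeze_zero_norm' (a := fun t : ℝ => 1 / Real.sqrt t)
    · filter_upwards [eventually_ge_atTop (1/c), eventually_ge_atTop 1] with t htc ht1
      have ht0 : (0:ℝ) < t := by linarith
      have hct : (1:ℝ) ≤ c * t := by
        have := mul_le_mul_of_nonneg_left htc hc.le
        rw [mul_one_div, div_self hc.ne'] at this
        linarith
      have h0ct : (0:ℝ) ≤ c*t := by linarith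
      have hsml : Real.sqrt (c*t) = Real.sqrt c * Real.sqrt t := Real.sqrt_mul hc.le t
      have hst : (0:ℝ) < Real.sqrt t := Real.sqrt_pos.2 ht0
      have hexp : Vstar (c*t)/Real.sqrt t - 2*Real.sqrt c/Real.sqrt π
          = (Dd (c*t) - 1)/Real.sqrt t := by
        rw [Vstar_eq_s9 _ h0ct, hsml]
        field_simp
        ring
      have hD1 : |Dd (c*t) - 1| ≤ 1 := by
        rw [abs_le]
        constructor
        · linarith [Dd_pos h0ct]
        · linarith [Dd_le hct]
      rw [hexp, Real.norm_eq_abs, abs_div, abs_of_pos hst]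
      gcongr
    · exact tendsto_const_nhds.div_atTop sqrt_tendsto
  have := hr.add (tendsto_const_nhds (x := 2*Real.sqrt c/Real.sqrt π))
  simpa using this

lemma ratio_tendsto_s9 (c : ℝ) (hc : 0 < c) :
    Tendsto (fun t : ℝ => Vstar (c*t) / Vstar t) atTop (𝓝 (Real.sqrt c)) := by
  have h1 := vstar_tendsto c hc
  have h2 : Tendsto (fun t : ℝ => Vstar t / Real.sqrt t) atTop (𝓝 (2 / Real.sqrt π)) := by
    have := vstar_tendsto 1 one_pos
    simpa using this
  have hne : (2:ℝ)/Real.sqrt π ≠ 0 := by positivity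
  have h3 := h1.div h2 hne
  have hval : (2 * Real.sqrt c / Real.sqrt π) / (2 / Real.sqrt π) = Real.sqrt c := by
    field_simp
  rw [hval] at h3
  apply h3.congr'
  filter_upwards [eventually_gt_atTop (0:ℝ)] with t ht
  have hst : Real.sqrt t ≠ 0 := (Real.sqrt_pos.2 ht).ne'
  simp only [Pi.div_apply]
  rw [div_div_div_cancel_right₀ hst]

/-- For fixed `x₀ ∈ (0,1]`, the layer correction
`V_{1/2}(x₀) = 1 − V*_{1/2}(x₀/ε²)/V*_{1/2}(1/ε²)` tends to `1 − √x₀`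
as `ε → 0⁺`; equivalently the ratio tends to `√x₀`. -/
theorem stmt_9 (x₀ : ℝ) (hx₀ : x₀ ∈ Set.Ioc (0 : ℝ) 1) :
    Filter.Tendsto (fun ε : ℝ => 1 - Vstar (x₀ / ε ^ 2) / Vstar (1 / ε ^ 2))
        (nhdsWithin 0 (Set.Ioi 0)) (nhds (1 - Real.sqrt x₀)) ∧
      Filter.Tendsto (fun ε : ℝ => Vstar (x₀ / ε ^ 2) / Vstar (1 / ε ^ 2))
        (nhdsWithin 0 (Set.Ioi 0)) (nhds (Real.sqrt x₀)) := by
  have hcomp : Tendsto (fun ε : ℝ => 1/ε^2) (𝓝[>] (0:ℝ)) atTop := by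
    have h1 : Tendsto (fun ε : ℝ => ε^2) (𝓝[>] (0:ℝ)) (𝓝[>] (0:ℝ)) := by
      rw [tendsto_nhdsWithin_iff]
      constructor
      · exact ((continuous_pow 2).tendsto' 0 0 (by norm_num)).mono_left nhdsWithin_le_nhds
      · filter_upwards [self_mem_nhdsWithin] with ε hε
        exact pow_pos (Set.mem_Ioi.mp hε) 2
    simpa [one_div, Function.comp_def] using tendsto_inv_nhdsGT_zero.comp h1
  have h2 : Tendsto (fun ε : ℝ => Vstar (x₀ / ε ^ 2) / Vstar (1 / ε ^ 2))
      (𝓝[>] (0:ℝ)) (𝓝 (Real.sqrt x₀)) := by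
    have := (ratio_tendsto_s9 x₀ hx₀.1).comp hcomp
    apply this.congr
    intro ε
    simp only [Function.comp]
    rw [mul_one_div]
  exact ⟨tendsto_const_nhds.sub h2, h2⟩
end
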